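/- arXiv:2411.03608 — 6 statements merged into one kernel-verified Lean document; each statement's English description precedes it below -/
import Mathlib

section
/- Let Θ = [θ̲, θ̄] ⊂ ℝ be a compact interval, let N ∈ ℕ, Q > 0 and δ > 0. Then there exists γ > 0 (one may take γ = Qδ/(N+1)) with the following property: for every finitely supported Borel probability measure F on Θ satisfying F({θ}) ≤ γ for every θ ∈ Θ, and for all weights λ₁,…,λ_N with λᵢ ≥ Q and Σᵢ λᵢ = 1 and Borel probability measures F₁,…,F_N on Θ with Σᵢ λᵢ Fᵢ = F, there exist nonnegative weights λ̄₁,…,λ̄_N summing to 1, Borel probability measures F̄₁,…,F̄_N on Θ with Σᵢ λ̄ᵢ F̄ᵢ = F, and pairwise disjoint Borel sets E₁,…,E_N ⊆ Θ with F̄ᵢ(Eᵢ) = 1 for each i, such that |λ̄ᵢ − λᵢ| < δ and d_LP(F̄ᵢ, Fᵢ) < δ for every i = 1,…,N. -/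
open MeasureTheory
open scoped ENNReal NNReal


open MeasureTheory Metric Set
open scoped ENNReal NNReal

variable {θl θu : ℝ}

/-- One-sided grid bound: from a Kolmogorov-type bound on CDFs on a bounded interval,
bound `μ B` by `ν` of a thickening plus an error. -/
lemma grid_bound (μ ν : Measure (Set.Icc θl θu)) [IsFiniteMeasure μ] [IsFiniteMeasure ν]
    (K ε : ℝ) (hK : 0 ≤ K) (hε : 0 < ε) (M : ℕ)
    (hcov : θu ≤ (θl - ε) + (M + 1) * ε)
    (habs : ∀ x : ℝ, |(μ {θ : Set.Icc θl θu | θ.1 ≤ x}).toReal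
        - (ν {θ : Set.Icc θl θu | θ.1 ≤ x}).toReal| ≤ K)
    (B : Set (Set.Icc θl θu)) :
    μ B ≤ ν (thickening (2*ε) B) + ENNReal.ofReal (2*K*(M+1)) := by
  classical
  set c : ℕ → ℝ := fun k => (θl - ε) + k * ε with hc
  have hcmono : StrictMono c := by
    intro a b hab
    simp only [hc]
    have : (a:ℝ) < b := by exact_mod_cast hab
    nlinarith
  set Ic : ℝ → Set (Set.Icc θl θu) := fun x => {θ | θ.1 ≤ x} with hIc
  have hIcmeas : ∀ x, MeasurableSet (Ic x) := fun x =>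
    measurableSet_le (measurable_subtype_coe) measurable_const
  set cell : ℕ → Set (Set.Icc θl θu) := fun k => Ic (c (k+1)) \ Ic (c k) with hcell
  have hcellmeas : ∀ k, MeasurableSet (cell k) := fun k => (hIcmeas _).diff (hIcmeas _)
  have hmemcell : ∀ k (θ : Set.Icc θl θu), θ ∈ cell k ↔ c k < θ.1 ∧ θ.1 ≤ c (k+1) := by
    intro k θ
    simp only [hcell, Set.mem_diff, hIc, Set.mem_setOf_eq, not_le]
    tauto
  -- measure of a cell
  have hcellμ : ∀ (ρ : Measure (Set.Icc θl θu)) (_ : IsFiniteMeasure ρ) k,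
      (ρ (cell k)).toReal = (ρ (Ic (c (k+1)))).toReal - (ρ (Ic (c k))).toReal := by
    intro ρ hρ k
    have hsub : Ic (c k) ⊆ Ic (c (k+1)) := by
      intro θ hθ
      exact le_trans hθ (hcmono (Nat.lt_succ_self k)).le
    rw [hcell]
    rw [measure_diff hsub (hIcmeas _).nullMeasurableSet (measure_ne_top ρ _)]
    rw [ENNReal.toReal_sub_of_le (measure_mono hsub) (measure_ne_top ρ _)]
  have hcellbound : ∀ k, μ (cell k) ≤ ν (cell k) + ENNReal.ofReal (2*K) := by
    intro k
    have h1 := habs (c (k+1))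
    have h2 := habs (c k)
    have hreal : (μ (cell k)).toReal ≤ (ν (cell k)).toReal + 2*K := by
      rw [hcellμ μ inferInstance k, hcellμ ν inferInstance k]
      rw [abs_le] at h1 h2
      linarith [h1.1, h1.2, h2.1, h2.2]
    calc μ (cell k) = ENNReal.ofReal ((μ (cell k)).toReal) := by
          rw [ENNReal.ofReal_toReal (measure_ne_top μ _)]
      _ ≤ ENNReal.ofReal ((ν (cell k)).toReal + 2*K) := ENNReal.ofReal_le_ofReal hreal
      _ = ENNReal.ofReal ((ν (cell k)).toReal) + ENNReal.ofReal (2*K) := by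
          rw [ENNReal.ofReal_add ENNReal.toReal_nonneg (by positivity)]
      _ = ν (cell k) + ENNReal.ofReal (2*K) := by
          rw [ENNReal.ofReal_toReal (measure_ne_top ν _)]
  set bad : Finset ℕ := (Finset.range (M+1)).filter (fun k => (B ∩ cell k).Nonempty) with hbad
  have hBsub : B ⊆ ⋃ k ∈ bad, cell k := by
    intro θ hθ
    -- find the cell containing θ
    have h0 : c 0 < θ.1 := by
      have := θ.2.1
      simp only [hc, Nat.cast_zero, zero_mul, add_zero]
      linarith
    have hM : θ.1 ≤ c (M+1) := by
      refine le_trans θ.2.2 (le_trans hcov (le_of_eq ?_))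
      simp only [hc]; push_cast; ring
    have hex : ∃ k < M + 1, c k < θ.1 ∧ θ.1 ≤ c (k+1) := by
      by_contra hcon
      push_neg at hcon
      have : ∀ k ≤ M + 1, c k < θ.1 := by
        intro k hk
        induction k with
        | zero => exact h0
        | succ n ih =>
          have hn : c n < θ.1 := ih (by omega)
          have := hcon n (by omega) hn
          exact lt_of_not_ge (by exact fun h => absurd h (not_le_of_gt this))
      exact absurd hM (not_le_of_gt (this (M+1) le_rfl))
    obtain ⟨k, hk, hk1, hk2⟩ := hex
    have hmem : θ ∈ cell k := (hmemcell k θ).mpr ⟨hk1, hk2⟩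
    have hkbad : k ∈ bad := by
      rw [hbad, Finset.mem_filter]
      exact ⟨Finset.mem_range.mpr hk, ⟨θ, hθ, hmem⟩⟩
    exact Set.mem_biUnion hkbad hmem
  have hdisj : (bad : Set ℕ).PairwiseDisjoint cell := by
    intro a ha b hb hab
    apply Set.disjoint_left.mpr
    intro θ hθa hθb
    rw [hmemcell] at hθa hθb
    rcases lt_or_gt_of_ne hab with h | h
    · have : c (a+1) ≤ c b := hcmono.le_iff_le.mpr (by omega)
      linarith [hθa.2, hθb.1]
    · have : c (b+1) ≤ c a := hcmono.le_iff_le.mpr (by omega)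
      linarith [hθb.2, hθa.1]
  have hthick : (⋃ k ∈ bad, cell k) ⊆ thickening (2*ε) B := by
    intro θ hθ
    rw [Set.mem_iUnion₂] at hθ
    obtain ⟨k, hk, hθk⟩ := hθ
    rw [hbad, Finset.mem_filter] at hk
    obtain ⟨b, hbB, hbk⟩ := hk.2
    rw [mem_thickening_iff]
    refine ⟨b, hbB, ?_⟩
    rw [hmemcell] at hθk hbk
    have hd : dist θ b ≤ ε := by
      rw [Subtype.dist_eq, Real.dist_eq, abs_le]
      have hck : c (k+1) = c k + ε := by simp only [hc]; push_cast; ring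
      constructor <;> [skip; skip] <;>
        · rw [hck] at hθk hbk; cases hθk; cases hbk; linarith
    linarith [hd]
  calc μ B ≤ μ (⋃ k ∈ bad, cell k) := measure_mono hBsub
    _ ≤ ∑ k ∈ bad, μ (cell k) := measure_biUnion_finset_le bad cell
    _ ≤ ∑ k ∈ bad, (ν (cell k) + ENNReal.ofReal (2*K)) :=
        Finset.sum_le_sum (fun k _ => hcellbound k)
    _ = (∑ k ∈ bad, ν (cell k)) + bad.card • ENNReal.ofReal (2*K) := by
        rw [Finset.sum_add_distrib, Finset.sum_const]
    _ = ν (⋃ k ∈ bad, cell k) + bad.card • ENNReal.ofReal (2*K) := by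
        rw [measure_biUnion_finset hdisj (fun k _ => hcellmeas k)]
    _ ≤ ν (thickening (2*ε) B) + (M+1) • ENNReal.ofReal (2*K) := by
        refine add_le_add (measure_mono hthick) ?_
        have hcard : bad.card ≤ M + 1 := le_trans (Finset.card_filter_le _ _) (by simp)
        exact nsmul_le_nsmul_left zero_le hcard
    _ = ν (thickening (2*ε) B) + ENNReal.ofReal (2*K*(M+1)) := by
        rw [nsmul_eq_mul]
        congr 1
        rw [← ENNReal.ofReal_natCast (M+1), ← ENNReal.ofReal_mul (by positivity)]
        congr 1
        push_cast
        ring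

lemma lp_dist_le_of_kolmogorov (μ ν : Measure (Set.Icc θl θu))
    [IsProbabilityMeasure μ] [IsProbabilityMeasure ν]
    (K ε : ℝ) (hK : 0 ≤ K) (hε : 0 < ε) (M : ℕ)
    (hcov : θu ≤ (θl - ε) + (M + 1) * ε)
    (habs : ∀ x : ℝ, |(μ {θ : Set.Icc θl θu | θ.1 ≤ x}).toReal
        - (ν {θ : Set.Icc θl θu | θ.1 ≤ x}).toReal| ≤ K)
    (hKM : 2*K*(M+1) ≤ 2*ε) :
    levyProkhorovDist μ ν ≤ 2*ε := by
  have habs' : ∀ x : ℝ, |(ν {θ : Set.Icc θl θu | θ.1 ≤ x}).toReal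
      - (μ {θ : Set.Icc θl θu | θ.1 ≤ x}).toReal| ≤ K := by
    intro x; rw [abs_sub_comm]; exact habs x
  have hoR : (ENNReal.ofReal (2*ε)).toReal = 2*ε := ENNReal.toReal_ofReal (by positivity)
  have hKM' : ENNReal.ofReal (2*K*(M+1)) ≤ ENNReal.ofReal (2*ε) :=
    ENNReal.ofReal_le_ofReal hKM
  have hboth : ∀ B : Set (Set.Icc θl θu),
      μ B ≤ ν (Metric.thickening ((ENNReal.ofReal (2*ε)).toReal) B) + ENNReal.ofReal (2*ε)
      ∧ ν B ≤ μ (Metric.thickening ((ENNReal.ofReal (2*ε)).toReal) B) + ENNReal.ofReal (2*ε) := by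
    intro B
    rw [hoR]
    constructor
    · exact le_trans (grid_bound μ ν K ε hK hε M hcov habs B) (add_le_add (le_refl _) hKM')
    · exact le_trans (grid_bound ν μ K ε hK hε M hcov habs' B) (add_le_add (le_refl _) hKM')
  have hedist : levyProkhorovEDist μ ν ≤ ENNReal.ofReal (2*ε) := by
    apply levyProkhorovEDist_le_of_forall μ ν (ENNReal.ofReal (2*ε))
    intro ε' B hlt hfin hB
    constructor
    · exact meas_le_of_le_of_forall_le_meas_thickening_add μ ν hlt.le (hboth B).1
    · exact meas_le_of_le_of_forall_le_meas_thickening_add ν μ hlt.le (hboth B).2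
  calc levyProkhorovDist μ ν = (levyProkhorovEDist μ ν).toReal := rfl
    _ ≤ (ENNReal.ofReal (2*ε)).toReal := ENNReal.toReal_mono ENNReal.ofReal_ne_top hedist
    _ = 2*ε := hoR


variable {α : Type*} {N : ℕ}

noncomputable def argmaxFin (hN : 0 < N) (D : Fin N → ℝ) : Fin N :=
  (Finset.exists_max_image Finset.univ D ⟨⟨0, hN⟩, Finset.mem_univ _⟩).choose

lemma argmaxFin_spec (hN : 0 < N) (D : Fin N → ℝ) (i : Fin N) :
    D i ≤ D (argmaxFin hN D) :=
  (Finset.exists_max_image Finset.univ D ⟨⟨0, hN⟩, Finset.mem_univ _⟩).choose_spec.2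
    i (Finset.mem_univ i)

lemma argmaxFin_ge_avg (hN : 0 < N) (D : Fin N → ℝ) :
    (∑ i, D i) / N ≤ D (argmaxFin hN D) := by
  rw [div_le_iff₀ (by exact_mod_cast hN)]
  calc ∑ i, D i ≤ ∑ _i : Fin N, D (argmaxFin hN D) :=
        Finset.sum_le_sum (fun i _ => argmaxFin_spec hN D i)
    _ = N * D (argmaxFin hN D) := by
        rw [Finset.sum_const, Finset.card_univ, Fintype.card_fin, nsmul_eq_mul]
    _ = D (argmaxFin hN D) * N := mul_comm _ _

variable [DecidableEq α]

noncomputable def greedyGo (hN : 0 < N) (p : Fin N → α → ℝ) (w : α → ℝ) :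
    (Fin N → ℝ) → List α → (α → Fin N)
  | _, [] => fun _ => ⟨0, hN⟩
  | D, θ :: t =>
      let D' := fun i => D i + p i θ
      let i0 := argmaxFin hN D'
      Function.update (greedyGo hN p w (Function.update D' i0 (D' i0 - w θ)) t) θ i0

/-- partial (filtered) discrepancy sums -/
noncomputable def Tsum (p : Fin N → α → ℝ) (w : α → ℝ) (v : α → ℝ)
    (a : α → Fin N) (l : List α) (x : ℝ) (i : Fin N) : ℝ :=
  ((l.filter (fun θ => decide (v θ ≤ x))).map
    (fun θ => p i θ - if a θ = i then w θ else 0)).sum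

lemma greedyGo_spec (hN : 0 < N) (p : Fin N → α → ℝ) (w : α → ℝ) (v : α → ℝ)
    (γ : ℝ) (hγ : 0 ≤ γ) :
    ∀ (l : List α), l.Pairwise (fun a b => v a ≤ v b) → l.Nodup →
    (∀ θ ∈ l, 0 ≤ w θ ∧ w θ ≤ γ ∧ (∀ i, 0 ≤ p i θ) ∧ ∑ i, p i θ = w θ) →
    ∀ (D : Fin N → ℝ), (∑ i, D i = 0) → (∀ i, -γ ≤ D i) →
    ∀ x : ℝ,
      (∑ i, (D i + Tsum p w v (greedyGo hN p w D l) l x i) = 0) ∧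
      (∀ i, -γ ≤ D i + Tsum p w v (greedyGo hN p w D l) l x i) := by
  intro l
  induction l with
  | nil =>
    intro _ _ _ D hD0 hDγ x
    simp only [Tsum, List.filter_nil, List.map_nil, List.sum_nil, add_zero]
    exact ⟨hD0, hDγ⟩
  | cons θ t ih =>
    intro hsort hnodup hw D hD0 hDγ x
    have hθt : θ ∉ t := (List.nodup_cons.mp hnodup).1
    set D' : Fin N → ℝ := fun i => D i + p i θ with hD'
    set i0 : Fin N := argmaxFin hN D' with hi0
    set D'' : Fin N → ℝ := Function.update D' i0 (D' i0 - w θ) with hD''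
    set a' : α → Fin N := greedyGo hN p w D'' t with ha'
    have hgo : greedyGo hN p w D (θ :: t) = Function.update a' θ i0 := by
      rw [greedyGo]
    obtain ⟨hw0, hwγ, hp0, hpsum⟩ := hw θ List.mem_cons_self
    have hwt : ∀ θ' ∈ t, 0 ≤ w θ' ∧ w θ' ≤ γ ∧ (∀ i, 0 ≤ p i θ') ∧ ∑ i, p i θ' = w θ' :=
      fun θ' hθ' => hw θ' (List.mem_cons_of_mem θ hθ')
    have hD'sum : ∑ i, D' i = w θ := by
      simp only [hD', Finset.sum_add_distrib, hD0, zero_add, hpsum]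
    have hD''sum : ∑ i, D'' i = 0 := by
      rw [hD'', Finset.sum_update_of_mem (Finset.mem_univ i0)]
      have : ∑ i ∈ Finset.univ \ {i0}, D' i = (∑ i, D' i) - D' i0 := by
        rw [Finset.sum_sdiff_eq_sub (Finset.singleton_subset_iff.mpr (Finset.mem_univ i0))]
        simp
      rw [this, hD'sum]; ring
    have hD''γ : ∀ i, -γ ≤ D'' i := by
      intro i
      rcases eq_or_ne i i0 with rfl | hne
      · rw [hD'', Function.update_self]
        have havg := argmaxFin_ge_avg hN D'
        rw [hD'sum] at havg
        have hN1 : (1:ℝ) ≤ N := by exact_mod_cast hN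
        have : 0 ≤ w θ / N := by positivity
        have hwN : w θ / N - w θ ≥ -γ := by
          rw [ge_iff_le, neg_le, neg_sub]
          calc w θ - w θ / N ≤ w θ := by
                have : 0 ≤ w θ / N := by positivity
                linarith
            _ ≤ γ := hwγ
        calc (-γ : ℝ) ≤ w θ / N - w θ := hwN
          _ ≤ D' i0 - w θ := by linarith [havg]
      · rw [hD'', Function.update_of_ne hne]
        calc (-γ:ℝ) ≤ D i := hDγ i
          _ ≤ D i + p i θ := le_add_of_nonneg_right (hp0 i)
    have ihspec := ih hsort.of_cons (List.nodup_cons.mp hnodup).2 hwt D'' hD''sum hD''γ x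
    -- Tsum for updated function agrees on t
    have hTt : ∀ i, Tsum p w v (Function.update a' θ i0) t x i = Tsum p w v a' t x i := by
      intro i
      unfold Tsum
      congr 1
      apply List.map_congr_left
      intro θ' hθ'
      have hθ'₂ : θ' ∈ t := List.mem_of_mem_filter hθ'
      have : θ' ≠ θ := fun h => hθt (h ▸ hθ'₂)
      rw [Function.update_of_ne this]
    by_cases hx : v θ ≤ x
    · have hfil : (θ :: t).filter (fun θ' => decide (v θ' ≤ x))
          = θ :: t.filter (fun θ' => decide (v θ' ≤ x)) := by
        rw [List.filter_cons, if_pos (by simpa using hx)]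
      have hT : ∀ i, Tsum p w v (Function.update a' θ i0) (θ :: t) x i
          = (p i θ - if i0 = i then w θ else 0) + Tsum p w v a' t x i := by
        intro i
        unfold Tsum
        rw [hfil, List.map_cons, List.sum_cons, Function.update_self]
        rw [show ((t.filter (fun θ' => decide (v θ' ≤ x))).map
          (fun θ' => p i θ' - if Function.update a' θ i0 θ' = i then w θ' else 0)).sum
          = Tsum p w v (Function.update a' θ i0) t x i from rfl, hTt i]
        rfl
      have hkey : ∀ i, D i + Tsum p w v (Function.update a' θ i0) (θ :: t) x i
          = D'' i + Tsum p w v a' t x i := by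
        intro i
        rw [hT i]
        rcases eq_or_ne i i0 with rfl | hne
        · rw [if_pos rfl, hD'', Function.update_self, hD']; ring
        · rw [if_neg (Ne.symm hne), hD'', Function.update_of_ne hne, hD']; ring
      rw [hgo]
      constructor
      · rw [Finset.sum_congr rfl (fun i _ => hkey i)]
        exact ihspec.1
      · intro i
        rw [hkey i]
        exact ihspec.2 i
    · have hfil : (θ :: t).filter (fun θ' => decide (v θ' ≤ x)) = [] := by
        rw [List.filter_eq_nil_iff]
        intro θ' hθ'
        rcases List.mem_cons.mp hθ' with rfl | hmem
        · simpa using hx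
        · have : v θ ≤ v θ' := (List.pairwise_cons.mp hsort).1 θ' hmem
          simp only [decide_eq_true_eq]
          intro h; exact hx (le_trans this h)
      have hT : ∀ (b : α → Fin N) i, Tsum p w v b (θ :: t) x i = 0 := by
        intro b i; unfold Tsum; rw [hfil]; simp
      rw [hgo]
      constructor
      · simp only [hT, add_zero]; exact hD0
      · intro i; simp only [hT, add_zero]; exact hDγ i

section Helpers

open scoped BigOperators

variable {θl θu : ℝ}

lemma finsupp_meas_toReal (F : Measure (Set.Icc θl θu)) [IsFiniteMeasure F]
    (S : Finset (Set.Icc θl θu)) (hS : F ((↑S : Set (Set.Icc θl θu))ᶜ) = 0)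
    (t : Set (Set.Icc θl θu)) (ht : MeasurableSet t) [DecidablePred (· ∈ t)] :
    (F t).toReal = ∑ θ ∈ S.filter (· ∈ t), (F {θ}).toReal := by
  classical
  have hSmeas : MeasurableSet (↑S : Set (Set.Icc θl θu)) := S.finite_toSet.measurableSet
  have h1 : F (t ∩ ↑S) + F (t \ ↑S) = F t := measure_inter_add_diff t hSmeas
  have h2 : F (t \ ↑S) = 0 := measure_mono_null (fun θ hθ => hθ.2) hS
  have h3 : F t = F (t ∩ ↑S) := by rw [← h1, h2, add_zero]
  have h4 : t ∩ ↑S = ⋃ θ ∈ S.filter (· ∈ t), ({θ} : Set (Set.Icc θl θu)) := by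
    ext θ
    simp only [Set.mem_inter_iff, Finset.mem_coe, Set.mem_iUnion, Finset.mem_filter,
      Set.mem_singleton_iff]
    constructor
    · rintro ⟨h5, h6⟩; exact ⟨θ, ⟨h6, h5⟩, rfl⟩
    · rintro ⟨θ', ⟨h5, h6⟩, rfl⟩; exact ⟨h6, h5⟩
  have h5 : F (t ∩ ↑S) = ∑ θ ∈ S.filter (· ∈ t), F {θ} := by
    rw [h4]
    exact measure_biUnion_finset
      (fun a _ b _ hab => by simpa [Set.disjoint_singleton] using hab)
      (fun b _ => measurableSet_singleton b)
  rw [h3, h5, ENNReal.toReal_sum (fun a _ => measure_ne_top F _)]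

lemma ratio_bound (g gb lamr b ng q : ℝ) (hq : 0 < q) (hb : q/2 ≤ b) (hlam : q ≤ lamr)
    (hg0 : 0 ≤ g) (hgl : g ≤ lamr) (h1 : |g - gb| ≤ ng) (h2 : |lamr - b| ≤ ng)
    (hng : 0 ≤ ng) :
    |gb / b - g / lamr| ≤ 4 * ng / q := by
  have hb0 : 0 < b := lt_of_lt_of_le (by linarith) hb
  have hl0 : 0 < lamr := lt_of_lt_of_le hq hlam
  have key : gb / b - g / lamr = (gb - g)/b + (g/lamr) * ((lamr - b)/b) := by
    field_simp
    ring
  rw [key]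
  have e1 : |(gb - g)/b| ≤ 2*ng/q := by
    rw [abs_div, abs_of_pos hb0, div_le_div_iff₀ hb0 hq]
    have h1' : |gb - g| ≤ ng := by rw [abs_sub_comm]; exact h1
    nlinarith [abs_nonneg (gb - g)]
  have e2 : |(g/lamr) * ((lamr - b)/b)| ≤ 2*ng/q := by
    rw [abs_mul, abs_div, abs_div, abs_of_pos hb0, abs_of_pos hl0]
    have hgl' : |g| / lamr ≤ 1 := by
      rw [div_le_one hl0, abs_of_nonneg hg0]; exact hgl
    have h2' : |lamr - b| / b ≤ 2*ng/q := by
      rw [div_le_div_iff₀ hb0 hq]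
      nlinarith [abs_nonneg (lamr - b)]
    calc |g|/lamr * (|lamr-b|/b) ≤ 1 * (2*ng/q) :=
          mul_le_mul hgl' h2' (by positivity) one_pos.le
      _ = 2*ng/q := one_mul _
  calc |(gb - g)/b + (g/lamr) * ((lamr - b)/b)|
      ≤ |(gb - g)/b| + |(g/lamr) * ((lamr - b)/b)| := abs_add_le _ _
    _ ≤ 2*ng/q + 2*ng/q := add_le_add e1 e2
    _ = 4*ng/q := by ring

end Helpers

set_option maxHeartbeats 2000000

/-- For finitely supported priors on `Θ = [θl, θu]` with small enough
atoms, every finite segmentation with weights bounded below by `Q` is `δ`-approximated by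
a finite *partitional* segmentation (pairwise disjoint supports), both in weights and in
the Lévy–Prokhorov metric. -/
theorem discrete_partitional_approximation
    (θl θu : ℝ) (hθ : θl ≤ θu) (N : ℕ) (Q δ : ℝ) (hQ : 0 < Q) (hδ : 0 < δ) :
    ∃ γ > (0 : ℝ), ∀ F : Measure (Set.Icc θl θu), IsProbabilityMeasure F →
      (∃ S : Finset (Set.Icc θl θu), F ↑S = 1) →
      (∀ θ : Set.Icc θl θu, F {θ} ≤ ENNReal.ofReal γ) →
      ∀ lam : Fin N → ℝ≥0, (∀ i, Q ≤ (lam i : ℝ)) → ∑ i, lam i = 1 →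
      ∀ Fs : Fin N → Measure (Set.Icc θl θu), (∀ i, IsProbabilityMeasure (Fs i)) →
        ∑ i, (lam i : ℝ≥0∞) • Fs i = F →
        ∃ (lamb : Fin N → ℝ≥0) (Fb : Fin N → Measure (Set.Icc θl θu))
          (Es : Fin N → Set (Set.Icc θl θu)),
          (∑ i, lamb i = 1) ∧ (∀ i, IsProbabilityMeasure (Fb i)) ∧
          (∑ i, (lamb i : ℝ≥0∞) • Fb i = F) ∧
          (∀ i, MeasurableSet (Es i)) ∧
          (∀ i j, i ≠ j → Disjoint (Es i) (Es j)) ∧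
          (∀ i, Fb i (Es i) = 1) ∧
          (∀ i, |(lamb i : ℝ) - (lam i : ℝ)| < δ) ∧
          (∀ i, levyProkhorovDist (Fb i) (Fs i) < δ) := by
  classical
  set L : ℝ := θu - θl with hLdef
  have hL0 : 0 ≤ L := by rw [hLdef]; linarith
  set m : ℝ := min δ 1 with hmdef
  have hm0 : 0 < m := lt_min hδ one_pos
  have hm1 : m ≤ 1 := min_le_right _ _
  have hmδ : m ≤ δ := min_le_left _ _
  have hm2 : m^2 ≤ 1 := by nlinarith
  have hm3 : m^2 ≤ m := by nlinarith
  set γ : ℝ := Q * m^2 / (100 * (N+1) * (L+1)) with hγdef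
  have hγ0 : 0 < γ := by rw [hγdef]; positivity
  have hγeq : γ * (100*((N:ℝ)+1)*(L+1)) = Q*m^2 := by
    rw [hγdef]; field_simp
  refine ⟨γ, hγ0, ?_⟩
  intro F hFprob hFsupp hFatom lam hlamQ hlam1 Fs hFsprob hFsum
  obtain ⟨S, hS⟩ := hFsupp
  rcases Nat.eq_zero_or_pos N with hN0 | hN
  · exfalso; subst hN0; simp at hlam1
  have hQ1 : Q ≤ 1 := by
    have h := Finset.single_le_sum (f := lam) (fun i _ => zero_le)
      (Finset.mem_univ (⟨0, hN⟩ : Fin N))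
    rw [hlam1] at h
    calc Q ≤ (lam ⟨0,hN⟩ : ℝ) := hlamQ _
      _ ≤ 1 := by exact_mod_cast h
  have hlamle1 : ∀ i, (lam i : ℝ) ≤ 1 := by
    intro i
    have h := Finset.single_le_sum (f := lam) (fun i _ => zero_le) (Finset.mem_univ i)
    rw [hlam1] at h
    exact_mod_cast h
  have hN1 : (1:ℝ) ≤ N := by exact_mod_cast hN
  -- basic measure facts
  have hSmeas : MeasurableSet (↑S : Set (Set.Icc θl θu)) := S.finite_toSet.measurableSet
  have hScompl : F ((↑S : Set (Set.Icc θl θu))ᶜ) = 0 := by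
    have h := measure_compl hSmeas (measure_ne_top F _)
    rw [hS, measure_univ] at h
    simpa using h
  have happly : ∀ t : Set (Set.Icc θl θu), (∑ i, (lam i : ℝ≥0∞) * Fs i t) = F t := by
    intro t
    rw [← hFsum, Measure.coe_finset_sum, Finset.sum_apply]
    simp [Measure.smul_apply, smul_eq_mul]
  have hFscompl : ∀ i, Fs i ((↑S : Set (Set.Icc θl θu))ᶜ) = 0 := by
    intro i
    have h := happly ((↑S : Set (Set.Icc θl θu))ᶜ)
    rw [hScompl] at h
    have h2 := (Finset.sum_eq_zero_iff.mp h) i (Finset.mem_univ i)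
    have hlamne : (lam i : ℝ≥0∞) ≠ 0 := by
      simp only [ne_eq, ENNReal.coe_eq_zero]
      intro h0
      have h3 := hlamQ i
      rw [h0] at h3
      simp at h3
      linarith
    exact (mul_eq_zero.mp h2).resolve_left hlamne
  -- weights
  set v : Set.Icc θl θu → ℝ := fun θ => θ.1 with hvdef
  set w : Set.Icc θl θu → ℝ := fun θ => (F {θ}).toReal with hwdef
  set p : Fin N → Set.Icc θl θu → ℝ := fun i θ => ((lam i : ℝ≥0∞) * Fs i {θ}).toReal with hpdef
  have hw0 : ∀ θ, 0 ≤ w θ := fun θ => ENNReal.toReal_nonneg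
  have hwle : ∀ θ, w θ ≤ γ := fun θ => ENNReal.toReal_le_of_le_ofReal hγ0.le (hFatom θ)
  have hp0 : ∀ i θ, 0 ≤ p i θ := fun i θ => ENNReal.toReal_nonneg
  have hpsum : ∀ θ, ∑ i, p i θ = w θ := by
    intro θ
    show ∑ i, ((lam i : ℝ≥0∞) * Fs i {θ}).toReal = (F {θ}).toReal
    rw [← happly {θ}]
    rw [ENNReal.toReal_sum (fun i _ =>
      ENNReal.mul_ne_top ENNReal.coe_ne_top (measure_ne_top _ _))]
  -- the sorted list and greedy assignment
  set l : List (Set.Icc θl θu) := S.sort (· ≤ ·) with hldef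
  have hlnd : l.Nodup := S.sort_nodup _
  have hlmem : ∀ θ, θ ∈ l ↔ θ ∈ S := fun θ => S.mem_sort _
  have hlpair : l.Pairwise (fun a b => v a ≤ v b) := by
    have h := S.pairwise_sort (· ≤ ·)
    exact h.imp (fun h' => Subtype.coe_le_coe.mpr h')
  set a : Set.Icc θl θu → Fin N := greedyGo hN p w 0 l with hadef
  have hwl : ∀ θ ∈ l, 0 ≤ w θ ∧ w θ ≤ γ ∧ (∀ i, 0 ≤ p i θ) ∧ ∑ i, p i θ = w θ :=
    fun θ _ => ⟨hw0 θ, hwle θ, fun i => hp0 i θ, hpsum θ⟩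
  have hspec := greedyGo_spec hN p w v γ hγ0.le l hlpair hlnd hwl 0 (by simp)
    (fun i => by simpa using hγ0.le)
  set T : Fin N → ℝ → ℝ := fun i x => Tsum p w v a l x i with hTdef
  have hT0 : ∀ x, ∑ i, T i x = 0 := by
    intro x
    have h := (hspec x).1
    simpa [hTdef, hadef] using h
  have hTlb : ∀ i x, -γ ≤ T i x := by
    intro i x
    have h := (hspec x).2 i
    simpa [hTdef, hadef] using h
  have hTub : ∀ i x, T i x ≤ N * γ := by
    intro i x
    have hsum := hT0 x
    have hsplit := Finset.add_sum_erase Finset.univ (fun j => T j x) (Finset.mem_univ i)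
    have hlow : ((Finset.univ.erase i).card : ℝ) * (-γ) ≤ ∑ j ∈ Finset.univ.erase i, T j x := by
      have h := Finset.card_nsmul_le_sum (Finset.univ.erase i) (fun j => T j x) (-γ)
        (fun j _ => hTlb j x)
      simpa [nsmul_eq_mul] using h
    have hcard : ((Finset.univ.erase i).card : ℝ) ≤ N := by
      have : (Finset.univ.erase i).card ≤ N := by
        calc (Finset.univ.erase i).card ≤ Finset.univ.card := Finset.card_erase_le
          _ = N := by simp
      exact_mod_cast this
    nlinarith [hγ0.le]
  -- T as finset sums
  have hTsum_eq : ∀ i x, T i x =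
      (∑ θ ∈ S.filter (fun θ => v θ ≤ x), p i θ)
      - (∑ θ ∈ S.filter (fun θ => v θ ≤ x ∧ a θ = i), w θ) := by
    intro i x
    rw [hTdef]
    show Tsum p w v a l x i = _
    unfold Tsum
    have hnd : (l.filter (fun θ => decide (v θ ≤ x))).Nodup := hlnd.filter _
    rw [← List.sum_toFinset _ hnd, List.toFinset_filter]
    have hltf : l.toFinset = S := by rw [hldef]; exact S.sort_toFinset _
    rw [hltf]
    have hfeq : S.filter (fun θ => (decide (v θ ≤ x)) = true) = S.filter (fun θ => v θ ≤ x) := by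
      apply Finset.filter_congr
      intro θ _
      simp
    rw [hfeq, Finset.sum_sub_distrib]
    congr 1
    have hff : S.filter (fun θ => v θ ≤ x ∧ a θ = i)
        = (S.filter (fun θ => v θ ≤ x)).filter (fun θ => a θ = i) := by
      rw [Finset.filter_filter]
    rw [hff]
    simp only [Finset.sum_filter]
  -- measurable sets
  have hIcmeas : ∀ x : ℝ, MeasurableSet {θ : Set.Icc θl θu | θ.1 ≤ x} :=
    fun x => measurableSet_le measurable_subtype_coe measurable_const
  set Es : Fin N → Set (Set.Icc θl θu) := fun i => (↑(S.filter (fun θ => a θ = i)) : Set _)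
    with hEsdef
  have hEsmeas : ∀ i, MeasurableSet (Es i) := fun i => (Finset.finite_toSet _).measurableSet
  have hEsmem : ∀ i θ, θ ∈ Es i ↔ θ ∈ S ∧ a θ = i := by
    intro i θ; rw [hEsdef]; simp
  have hEsdisj : ∀ i j, i ≠ j → Disjoint (Es i) (Es j) := by
    intro i j hij
    rw [Set.disjoint_left]
    intro θ hθi hθj
    rw [hEsmem] at hθi hθj
    exact hij (hθi.2 ▸ hθj.2 ▸ rfl)
  -- measure values as sums
  have hGb : ∀ i (x : ℝ),
      (F ({θ : Set.Icc θl θu | θ.1 ≤ x} ∩ Es i)).toReal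
        = ∑ θ ∈ S.filter (fun θ => v θ ≤ x ∧ a θ = i), w θ := by
    intro i x
    rw [finsupp_meas_toReal F S hScompl _ ((hIcmeas x).inter (hEsmeas i))]
    apply Finset.sum_congr _ (fun _ _ => rfl)
    ext θ
    simp only [Finset.mem_filter, Set.mem_inter_iff, Set.mem_setOf_eq, hEsmem, hvdef]
    tauto
  have hGp : ∀ i (x : ℝ),
      (lam i : ℝ) * (Fs i {θ : Set.Icc θl θu | θ.1 ≤ x}).toReal
        = ∑ θ ∈ S.filter (fun θ => v θ ≤ x), p i θ := by
    intro i x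
    rw [finsupp_meas_toReal (Fs i) S (hFscompl i) _ (hIcmeas x), Finset.mul_sum]
    apply Finset.sum_congr
    · apply Finset.filter_congr; intro θ _; simp [hvdef]
    · intro θ _
      rw [hpdef]
      show (lam i : ℝ) * (Fs i {θ}).toReal = ((lam i : ℝ≥0∞) * Fs i {θ}).toReal
      rw [ENNReal.toReal_mul]
      simp
  have hTmeas : ∀ i (x : ℝ), T i x =
      (lam i : ℝ) * (Fs i {θ : Set.Icc θl θu | θ.1 ≤ x}).toReal
        - (F ({θ : Set.Icc θl θu | θ.1 ≤ x} ∩ Es i)).toReal := by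
    intro i x
    rw [hTsum_eq i x, hGp, hGb]
  have hIcU : {θ : Set.Icc θl θu | θ.1 ≤ θu} = Set.univ := by
    ext θ; simp only [Set.mem_setOf_eq, Set.mem_univ, iff_true]; exact θ.2.2
  have hbT : ∀ i, (F (Es i)).toReal = (lam i : ℝ) - T i θu := by
    intro i
    have h := hTmeas i θu
    rw [hIcU, Set.univ_inter] at h
    rw [measure_univ] at h
    simp only [ENNReal.toReal_one, mul_one] at h
    linarith
  -- numeric bounds
  have hNγ : (N:ℝ) * γ ≤ Q * m^2 / 100 := by
    rw [le_div_iff₀ (by norm_num : (0:ℝ) < 100)]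
    nlinarith [hγeq, hγ0.le, hL0, hN1, mul_nonneg hγ0.le hL0,
      mul_nonneg (mul_nonneg hγ0.le hL0) (le_trans zero_le_one hN1)]
  have hNγm : (N:ℝ) * γ ≤ m/100 := by
    have h4 : Q * m^2 ≤ m := by nlinarith [mul_le_mul hQ1 hm3 (by positivity) zero_le_one]
    linarith [hNγ]
  have hNγQ : (N:ℝ)*γ ≤ Q/2 := by
    have h4 : Q * m^2 ≤ Q := by nlinarith [mul_le_mul_of_nonneg_left hm2 hQ.le]
    linarith [hNγ]
  have hb_lb : ∀ i, Q/2 ≤ (F (Es i)).toReal := by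
    intro i
    rw [hbT i]
    linarith [hTub i θu, hlamQ i, hNγQ]
  have hFEs0 : ∀ i, F (Es i) ≠ 0 := by
    intro i h
    have hb := hb_lb i
    rw [h] at hb
    simp at hb
    linarith
  have hFEstop : ∀ i, F (Es i) ≠ ⊤ := fun i => measure_ne_top F _
  have hTabs : ∀ i x, |T i x| ≤ (N:ℝ)*γ := by
    intro i x
    rw [abs_le]
    constructor
    · have hγN : γ ≤ (N:ℝ)*γ := by nlinarith [hγ0.le, hN1]
      linarith [hTlb i x]
    · exact hTub i x
  have hFbprob : ∀ i, IsProbabilityMeasure ((F (Es i))⁻¹ • F.restrict (Es i)) := by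
    intro i
    constructor
    rw [Measure.smul_apply, Measure.restrict_apply MeasurableSet.univ, Set.univ_inter,
      smul_eq_mul, ENNReal.inv_mul_cancel (hFEs0 i) (hFEstop i)]
  have hUnion : (⋃ i ∈ Finset.univ, Es i) = (↑S : Set (Set.Icc θl θu)) := by
    ext θ
    constructor
    · intro h
      rw [Set.mem_iUnion₂] at h
      obtain ⟨i, -, hi⟩ := h
      exact Finset.mem_coe.mpr ((hEsmem i θ).mp hi).1
    · intro h
      exact Set.mem_biUnion (Finset.mem_univ (a θ))
        ((hEsmem (a θ) θ).mpr ⟨Finset.mem_coe.mp h, rfl⟩)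
  have hEsdisjU : (↑(Finset.univ : Finset (Fin N)) : Set (Fin N)).PairwiseDisjoint Es :=
    fun i _ j _ hij => hEsdisj i j hij
  have hsumEs : ∑ i, F (Es i) = 1 := by
    rw [← measure_biUnion_finset hEsdisjU (fun i _ => hEsmeas i), hUnion, hS]
  have hFt : ∀ t : Set (Set.Icc θl θu), MeasurableSet t → F (t ∩ ↑S) = F t := by
    intro t _
    have h1 := measure_inter_add_diff (μ := F) t hSmeas
    have h2 : F (t \ ↑S) = 0 := measure_mono_null (fun θ hθ => hθ.2) hScompl
    rw [h2, add_zero] at h1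
    exact h1
  refine ⟨fun i => (F (Es i)).toNNReal, fun i => (F (Es i))⁻¹ • F.restrict (Es i), Es,
    ?_, fun i => hFbprob i, ?_, fun i => hEsmeas i, hEsdisj, ?_, ?_, ?_⟩
  · -- sum of weights is 1
    have h : ((∑ i, (F (Es i)).toNNReal : ℝ≥0) : ℝ≥0∞) = ((1:ℝ≥0) : ℝ≥0∞) := by
      rw [ENNReal.coe_finset_sum,
        Finset.sum_congr rfl (fun i _ => ENNReal.coe_toNNReal (hFEstop i)), hsumEs,
        ENNReal.coe_one]
    exact_mod_cast h
  · -- mixture reconstructs F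
    have hsmul : ∀ i, ((F (Es i)).toNNReal : ℝ≥0∞) • ((F (Es i))⁻¹ • F.restrict (Es i))
        = F.restrict (Es i) := by
      intro i
      rw [ENNReal.coe_toNNReal (hFEstop i), smul_smul,
        ENNReal.mul_inv_cancel (hFEs0 i) (hFEstop i), one_smul]
    rw [Finset.sum_congr rfl (fun i _ => hsmul i)]
    ext t ht
    rw [Measure.coe_finset_sum, Finset.sum_apply]
    simp only [Measure.restrict_apply ht]
    have hdisj2 : (↑(Finset.univ : Finset (Fin N)) : Set (Fin N)).PairwiseDisjoint
        (fun i => t ∩ Es i) := fun i _ j _ hij =>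
      (hEsdisj i j hij).mono Set.inter_subset_right Set.inter_subset_right
    rw [← measure_biUnion_finset hdisj2 (fun i _ => ht.inter (hEsmeas i))]
    have h3 : (⋃ i ∈ Finset.univ, t ∩ Es i) = t ∩ (⋃ i ∈ Finset.univ, Es i) := by
      rw [Set.inter_iUnion₂]
    rw [h3, hUnion, hFt t ht]
  · -- Fb i (Es i) = 1
    intro i
    rw [Measure.smul_apply, Measure.restrict_apply (hEsmeas i), Set.inter_self, smul_eq_mul,
      ENNReal.inv_mul_cancel (hFEs0 i) (hFEstop i)]
  · -- weights are close
    intro i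
    have hco : (((F (Es i)).toNNReal : ℝ≥0) : ℝ) = (F (Es i)).toReal := rfl
    rw [hco, hbT i, show (lam i:ℝ) - T i θu - (lam i:ℝ) = -(T i θu) by ring, abs_neg]
    have hlt : (N:ℝ)*γ < δ := by nlinarith [hNγm, hm0, hmδ]
    calc |T i θu| ≤ (N:ℝ)*γ := hTabs i θu
      _ < δ := hlt
  · -- Lévy–Prokhorov closeness
    intro i
    haveI := hFbprob i
    haveI := hFsprob i
    set ε : ℝ := m/4 with hεdef
    have hε0 : 0 < ε := by rw [hεdef]; positivity
    set M : ℕ := ⌈L/ε⌉₊ with hMdef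
    set K : ℝ := m^2/(25*(L+1)) with hKdef
    have hK0 : 0 ≤ K := by rw [hKdef]; positivity
    have hden : (0:ℝ) < 25*(L+1) := by positivity
    have hcov : θu ≤ (θl - ε) + ((M:ℝ) + 1) * ε := by
      have h1 : L/ε ≤ (M:ℝ) := Nat.le_ceil _
      have h2 : L ≤ (M:ℝ) * ε := by
        rw [div_le_iff₀ hε0] at h1
        linarith
      have h4 : (θl - ε) + ((M:ℝ) + 1) * ε = θl + (M:ℝ) * ε := by ring
      rw [h4, hLdef] at *
      linarith
    have hMlt : (M:ℝ) < L/ε + 1 := Nat.ceil_lt_add_one (by positivity)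
    have hMm : ((M:ℝ)+1) * m ≤ 4*(L+1) := by
      have hLε : L/ε = 4*L/m := by
        rw [hεdef]
        rw [div_div_eq_mul_div]
        ring
      rw [hLε] at hMlt
      have h4L : 4*L/m * m = 4*L := div_mul_cancel₀ _ (ne_of_gt hm0)
      have h5 := mul_lt_mul_of_pos_right hMlt hm0
      rw [add_mul, h4L, one_mul] at h5
      nlinarith [hm0.le, hm1]
    have hKM : 2*K*((M:ℝ)+1) ≤ 2*ε := by
      rw [hKdef, hεdef]
      have e : 2*(m^2/(25*(L+1)))*((M:ℝ)+1) = (2*m*(((M:ℝ)+1)*m))/(25*(L+1)) := by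
        field_simp
      rw [e, div_le_iff₀ hden]
      nlinarith [hMm, hm0.le, hm1, hL0]
    have hlamne : (lam i : ℝ) ≠ 0 := by
      have := hlamQ i
      intro h
      rw [h] at this
      linarith
    have hKQ : 4*((N:ℝ)*γ)/Q ≤ K := by
      rw [hKdef, div_le_div_iff₀ hQ hden]
      nlinarith [hγeq, mul_nonneg hγ0.le hL0, hγ0.le, hL0]
    have habs : ∀ x : ℝ, |(((F (Es i))⁻¹ • F.restrict (Es i)) {θ : Set.Icc θl θu | θ.1 ≤ x}).toReal
        - (Fs i {θ : Set.Icc θl θu | θ.1 ≤ x}).toReal| ≤ K := by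
      intro x
      have hFb_val : (((F (Es i))⁻¹ • F.restrict (Es i)) {θ : Set.Icc θl θu | θ.1 ≤ x}).toReal
          = (F ({θ : Set.Icc θl θu | θ.1 ≤ x} ∩ Es i)).toReal / (F (Es i)).toReal := by
        rw [Measure.smul_apply, Measure.restrict_apply (hIcmeas x), smul_eq_mul,
          ENNReal.toReal_mul, ENNReal.toReal_inv, inv_mul_eq_div]
      have hFs_val : (Fs i {θ : Set.Icc θl θu | θ.1 ≤ x}).toReal
          = ((lam i:ℝ) * (Fs i {θ : Set.Icc θl θu | θ.1 ≤ x}).toReal) / (lam i:ℝ) :=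
        (mul_div_cancel_left₀ _ hlamne).symm
      rw [hFb_val]
      rw [hFs_val]
      have hgl : (lam i:ℝ) * (Fs i {θ : Set.Icc θl θu | θ.1 ≤ x}).toReal ≤ (lam i:ℝ) := by
        have h1 : Fs i {θ : Set.Icc θl θu | θ.1 ≤ x} ≤ 1 := prob_le_one
        have h2 : (Fs i {θ : Set.Icc θl θu | θ.1 ≤ x}).toReal ≤ 1 := by
          have := ENNReal.toReal_mono ENNReal.one_ne_top h1
          simpa using this
        nlinarith [(lam i).coe_nonneg]
      have h1 : |(lam i:ℝ) * (Fs i {θ : Set.Icc θl θu | θ.1 ≤ x}).toReal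
          - (F ({θ : Set.Icc θl θu | θ.1 ≤ x} ∩ Es i)).toReal| ≤ (N:ℝ)*γ := by
        rw [← hTmeas i x]
        exact hTabs i x
      have h2 : |(lam i:ℝ) - (F (Es i)).toReal| ≤ (N:ℝ)*γ := by
        rw [hbT i, show (lam i:ℝ) - ((lam i:ℝ) - T i θu) = T i θu by ring]
        exact hTabs i θu
      refine le_trans (ratio_bound _ _ _ _ ((N:ℝ)*γ) Q hQ (hb_lb i) (hlamQ i)
        (by positivity) hgl h1 h2 (by positivity)) hKQ
    have hle := lp_dist_le_of_kolmogorov ((F (Es i))⁻¹ • F.restrict (Es i)) (Fs i)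
      K ε hK0 hε0 M hcov habs hKM
    calc levyProkhorovDist ((F (Es i))⁻¹ • F.restrict (Es i)) (Fs i) ≤ 2*ε := hle
      _ < δ := by rw [hεdef]; nlinarith [hmδ, hm0]
end

section
/- For every Borel probability measure G on Θ, the supremum of Π(·, G) over A is attained. Moreover, the value function V(G) := max_{a∈A} Π(a, G) is continuous on Δ(Θ) with the weak-* topology, and the maximizer correspondence has closed graph: if G_n → G weakly, a_n maximizes Π(·, G_n) over A for each n, and a_n → a, then a maximizes Π(·, G) over A. -/
open MeasureTheory Filter Topology
open scoped ENNReal NNReal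

/-- The monopolist's expected profit `Π(a, G) = w(a) · G({θ : a ≤ θ})` from charging
price `a` when the belief about the type in `Θ = [θl, θu]` is `G`. -/
noncomputable def monopolyProfit (θl θu : ℝ) (w : ℝ → ℝ) (a : ℝ)
    (G : ProbabilityMeasure (Set.Icc θl θu)) : ℝ :=
  w a * ((G : Measure (Set.Icc θl θu)) {θ : Set.Icc θl θu | a ≤ (θ : ℝ)}).toReal

namespace MonopolyAux

variable {θl θu : ℝ}

abbrev S (θl θu a : ℝ) : Set (Set.Icc θl θu) := {θ : Set.Icc θl θu | a ≤ (θ : ℝ)}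
abbrev T (θl θu b : ℝ) : Set (Set.Icc θl θu) := {θ : Set.Icc θl θu | b < (θ : ℝ)}

lemma S_closed (a : ℝ) : IsClosed (S θl θu a) :=
  isClosed_le continuous_const continuous_subtype_val

lemma T_open (b : ℝ) : IsOpen (T θl θu b) :=
  isOpen_lt continuous_const continuous_subtype_val

noncomputable def m (G : ProbabilityMeasure (Set.Icc θl θu)) (a : ℝ) : ℝ :=
  ((G : Measure (Set.Icc θl θu)) (S θl θu a)).toReal

lemma m_nonneg (G : ProbabilityMeasure (Set.Icc θl θu)) (a : ℝ) : 0 ≤ m G a :=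
  ENNReal.toReal_nonneg

lemma m_le_one (G : ProbabilityMeasure (Set.Icc θl θu)) (a : ℝ) : m G a ≤ 1 := by
  have h := prob_le_one (μ := (G : Measure (Set.Icc θl θu))) (s := S θl θu a)
  simpa [m] using ENNReal.toReal_le_of_le_ofReal zero_le_one (by simpa using h)

lemma m_anti (G : ProbabilityMeasure (Set.Icc θl θu)) {a b : ℝ} (h : a ≤ b) :
    m G b ≤ m G a := by
  apply ENNReal.toReal_mono (measure_ne_top _ _)
  exact measure_mono (fun θ hθ => le_trans h hθ)

lemma m_eq_one (G : ProbabilityMeasure (Set.Icc θl θu)) {a : ℝ} (h : a ≤ θl) :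
    m G a = 1 := by
  have : S θl θu a = Set.univ := by
    ext θ; simpa [S] using le_trans h θ.2.1
  simp [m, this]

lemma measure_T_le (G : ProbabilityMeasure (Set.Icc θl θu)) (b : ℝ) :
    ((G : Measure (Set.Icc θl θu)) (T θl θu b)).toReal ≤ m G b := by
  apply ENNReal.toReal_mono (measure_ne_top _ _)
  exact measure_mono (fun θ hθ => (le_of_lt hθ : b ≤ (θ : ℝ)))

lemma m_le_measure_T (G : ProbabilityMeasure (Set.Icc θl θu)) {b' b : ℝ} (h : b' < b) :
    m G b ≤ ((G : Measure (Set.Icc θl θu)) (T θl θu b')).toReal := by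
  apply ENNReal.toReal_mono (measure_ne_top _ _)
  exact measure_mono (fun θ hθ => lt_of_lt_of_le h hθ)

/-- Left approximate continuity of `m` from below. -/
lemma m_left (G : ProbabilityMeasure (Set.Icc θl θu)) (a : ℝ) {ε : ℝ} (hε : 0 < ε) :
    ∃ δ > 0, m G (a - δ) < m G a + ε := by
  have hmeas : ∀ n : ℕ, NullMeasurableSet (S θl θu (a - 1 / (n + 1)))
      (G : Measure (Set.Icc θl θu)) :=
    fun n => ((S_closed _).measurableSet).nullMeasurableSet
  have hanti : Antitone (fun n : ℕ => S θl θu (a - 1 / (n + 1))) := by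
    intro i j hij θ hθ
    have hθ' : a - 1 / (j + 1) ≤ (θ : ℝ) := hθ
    show a - 1 / (i + 1) ≤ (θ : ℝ)
    refine le_trans ?_ hθ'
    have : (1 : ℝ) / (j + 1) ≤ 1 / (i + 1) := by
      have hij' : (i:ℝ) ≤ j := by exact_mod_cast hij
      apply one_div_le_one_div_of_le (by positivity) (by linarith)
    linarith
  have hInter : (⋂ n : ℕ, S θl θu (a - 1 / (n + 1))) = S θl θu a := by
    ext θ
    simp only [Set.mem_iInter, S, Set.mem_setOf_eq]
    constructor
    · intro h
      by_contra hlt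
      push_neg at hlt
      obtain ⟨n, hn⟩ := exists_nat_one_div_lt (show (0:ℝ) < a - θ by linarith)
      have := h n
      linarith
    · intro h n
      have : (0:ℝ) < 1 / (n + 1) := by positivity
      linarith
  have htend := tendsto_measure_iInter_atTop (μ := (G : Measure (Set.Icc θl θu)))
    hmeas hanti ⟨0, measure_ne_top _ _⟩
  rw [hInter] at htend
  have htoReal : Tendsto (fun n : ℕ => m G (a - 1 / (n + 1))) atTop (𝓝 (m G a)) :=
    (ENNReal.tendsto_toReal (measure_ne_top _ _)).comp htend
  have := (htoReal.eventually (eventually_lt_nhds (show m G a < m G a + ε by linarith))).exists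
  obtain ⟨n, hn⟩ := this
  exact ⟨1 / (n + 1), by positivity, hn⟩


lemma P_closed (Gn : ℕ → ProbabilityMeasure (Set.Icc θl θu)) (G : ProbabilityMeasure (Set.Icc θl θu))
    (hGn : Tendsto Gn atTop (𝓝 G)) (a : ℝ) {ε : ℝ} (hε : 0 < ε) :
    ∀ᶠ n in atTop, m (Gn n) a < m G a + ε := by
  have hlim := ProbabilityMeasure.limsup_measure_closed_le_of_tendsto hGn (S_closed (θl := θl) (θu := θu) a)
  have hne : ((G : Measure (Set.Icc θl θu)) (S θl θu a)) ≠ ⊤ := measure_ne_top _ _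
  have hlt : Filter.limsup (fun n => (Gn n : Measure (Set.Icc θl θu)) (S θl θu a)) atTop
      < (G : Measure (Set.Icc θl θu)) (S θl θu a) + ENNReal.ofReal (ε / 2) :=
    lt_of_le_of_lt hlim (ENNReal.lt_add_right hne (by simp [ENNReal.ofReal_pos]; linarith))
  filter_upwards [Filter.eventually_lt_of_limsup_lt hlt] with n hn
  have h1 : m (Gn n) a ≤ m G a + ε / 2 := by
    have := ENNReal.toReal_mono (by finiteness) hn.le
    rwa [ENNReal.toReal_add hne (by finiteness), ENNReal.toReal_ofReal (by linarith)] at this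
  linarith

lemma P_open (Gn : ℕ → ProbabilityMeasure (Set.Icc θl θu)) (G : ProbabilityMeasure (Set.Icc θl θu))
    (hGn : Tendsto Gn atTop (𝓝 G)) (b : ℝ) {ε : ℝ} (hε : 0 < ε) :
    ∀ᶠ n in atTop, ((G : Measure (Set.Icc θl θu)) (T θl θu b)).toReal - ε < m (Gn n) b := by
  have hlim := ProbabilityMeasure.le_liminf_measure_open_of_tendsto hGn (T_open (θl := θl) (θu := θu) b)
  set r := ((G : Measure (Set.Icc θl θu)) (T θl θu b)).toReal with hr
  rcases lt_or_ge r ε with h | h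
  · filter_upwards with n
    have h0 : (0:ℝ) ≤ ((Gn n : Measure (Set.Icc θl θu)) (T θl θu b)).toReal := ENNReal.toReal_nonneg
    have := measure_T_le (Gn n) b
    linarith
  · have hεr : 0 ≤ r - ε / 2 := by linarith
    have hc : ENNReal.ofReal (r - ε / 2) < (G : Measure (Set.Icc θl θu)) (T θl θu b) := by
      rw [ENNReal.ofReal_lt_iff_lt_toReal hεr (measure_ne_top _ _)]
      linarith
    have hev := Filter.eventually_lt_of_lt_liminf (lt_of_lt_of_le hc hlim)
    filter_upwards [hev] with n hn
    have h1 : r - ε / 2 < ((Gn n : Measure (Set.Icc θl θu)) (T θl θu b)).toReal := by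
      have := (ENNReal.toReal_lt_toReal (by finiteness) (by finiteness)).mpr hn
      rwa [ENNReal.toReal_ofReal hεr] at this
    have := measure_T_le (Gn n) b
    linarith


lemma key_ub (a0 a1 : ℝ) (w : ℝ → ℝ) (hw_cont : ContinuousOn w (Set.Icc a0 a1))
    (hw_mono : MonotoneOn w (Set.Icc a0 a1)) (hw_nonneg : ∀ x ∈ Set.Icc a0 a1, 0 ≤ w x)
    (Gn : ℕ → ProbabilityMeasure (Set.Icc θl θu)) (G : ProbabilityMeasure (Set.Icc θl θu))
    (hGn : Tendsto Gn atTop (𝓝 G)) (an : ℕ → ℝ) (a : ℝ)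
    (han : ∀ n, an n ∈ Set.Icc a0 a1) (haA : a ∈ Set.Icc a0 a1)
    (hat : Tendsto an atTop (𝓝 a)) {ε : ℝ} (hε : 0 < ε) :
    ∀ᶠ n in atTop, w (an n) * m (Gn n) (an n) < w a * m G a + ε := by
  have ha1 : a1 ∈ Set.Icc a0 a1 := Set.right_mem_Icc.mpr (haA.1.trans haA.2)
  set W := w a1 with hWdef
  have hW0 : 0 ≤ W := hw_nonneg a1 ha1
  have hWa : w a ≤ W := hw_mono haA ha1 haA.2
  have hwa0 : 0 ≤ w a := hw_nonneg a haA
  set e := min 1 (ε / (2 * W + 4)) with he_def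
  have he : 0 < e := lt_min one_pos (by positivity)
  have he1 : e ≤ 1 := min_le_left _ _
  have heε : e * (2 * W + 4) ≤ ε := by
    have h1 : e ≤ ε / (2 * W + 4) := min_le_right _ _
    have h2 : (0:ℝ) < 2 * W + 4 := by linarith
    calc e * (2 * W + 4) ≤ (ε / (2 * W + 4)) * (2 * W + 4) :=
          mul_le_mul_of_nonneg_right h1 h2.le
      _ = ε := by field_simp
  obtain ⟨δ, hδ, hδm⟩ := m_left G a he
  have h1 := P_closed Gn G hGn (a - δ) he
  have h2 : ∀ᶠ n in atTop, a - δ < an n := hat.eventually (eventually_gt_nhds (by linarith))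
  have hwt : Tendsto (fun n => w (an n)) atTop (𝓝 (w a)) := by
    have hin : Tendsto an atTop (𝓝[Set.Icc a0 a1] a) :=
      tendsto_nhdsWithin_iff.mpr ⟨hat, Filter.Eventually.of_forall han⟩
    exact (hw_cont a haA).tendsto.comp hin
  have h3 : ∀ᶠ n in atTop, w (an n) < w a + e := hwt.eventually (eventually_lt_nhds (by linarith))
  filter_upwards [h1, h2, h3] with n e1 e2 e3
  have hm' : m (Gn n) (an n) ≤ m (Gn n) (a - δ) := m_anti _ (by linarith)
  have h0w : 0 ≤ w (an n) := hw_nonneg _ (han n)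
  have hmn : m (Gn n) (an n) ≤ m G a + 2 * e := by linarith
  have hm0 : 0 ≤ m (Gn n) (an n) := m_nonneg _ _
  have hma0 : 0 ≤ m G a := m_nonneg _ _
  have hma1 : m G a ≤ 1 := m_le_one _ _
  have hstep : w (an n) * m (Gn n) (an n) ≤ (w a + e) * (m G a + 2 * e) :=
    mul_le_mul e3.le hmn hm0 (by linarith)
  nlinarith [mul_pos he he, mul_le_mul_of_nonneg_left hma1 he.le,
    mul_le_mul_of_nonneg_left hWa he.le]

lemma key_lb (ha0 : a0 ≤ θl) (ha : a0 ≤ a1) (w : ℝ → ℝ)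
    (hw_cont : ContinuousOn w (Set.Icc a0 a1))
    (hw_mono : MonotoneOn w (Set.Icc a0 a1)) (hw_nonneg : ∀ x ∈ Set.Icc a0 a1, 0 ≤ w x)
    (Gn : ℕ → ProbabilityMeasure (Set.Icc θl θu)) (G : ProbabilityMeasure (Set.Icc θl θu))
    (hGn : Tendsto Gn atTop (𝓝 G)) (b : ℝ) (hb : b ∈ Set.Icc a0 a1) {ε : ℝ} (hε : 0 < ε) :
    ∃ b' ∈ Set.Icc a0 a1, ∀ᶠ n in atTop, w b * m G b - ε < w b' * m (Gn n) b' := by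
  rcases eq_or_lt_of_le hb.1 with heq | hlt
  · refine ⟨b, hb, ?_⟩
    filter_upwards with n
    rw [m_eq_one G (heq ▸ ha0), m_eq_one (Gn n) (heq ▸ ha0)]
    linarith
  · have ha1 : a1 ∈ Set.Icc a0 a1 := Set.right_mem_Icc.mpr ha
    set W := w a1 with hWdef
    have hW0 : 0 ≤ W := hw_nonneg a1 ha1
    set e := ε / (2 * (W + 1)) with he_def
    have he : 0 < e := by positivity
    have heε : e * (2 * (W + 1)) = ε := by
      rw [he_def]; field_simp
    obtain ⟨δ, hδ, hδw⟩ := Metric.continuousWithinAt_iff.mp (hw_cont b hb) e he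
    set b' := max a0 (b - δ / 2) with hb'_def
    have hb'A : b' ∈ Set.Icc a0 a1 := ⟨le_max_left _ _, max_le ha (by linarith [hb.2])⟩
    have hb'b : b' < b := max_lt hlt (by linarith)
    have hdist : dist b' b < δ := by
      rw [Real.dist_eq, abs_lt]
      constructor
      · have : b - δ / 2 ≤ b' := le_max_right _ _
        linarith
      · linarith
    have hw' : w b - e < w b' := by
      have := hδw hb'A hdist
      rw [Real.dist_eq, abs_lt] at this
      linarith [this.1]
    refine ⟨b', hb'A, ?_⟩
    have h1 := P_open Gn G hGn b' he
    have hGT : m G b ≤ ((G : Measure (Set.Icc θl θu)) (T θl θu b')).toReal :=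
      m_le_measure_T G hb'b
    filter_upwards [h1] with n e1
    have h2 : m G b - e < m (Gn n) b' := by linarith
    have h0w' : 0 ≤ w b' := hw_nonneg _ hb'A
    have hw'W : w b' ≤ W := hw_mono hb'A ha1 hb'A.2
    have hm0 : 0 ≤ m (Gn n) b' := m_nonneg _ _
    have hmb0 : 0 ≤ m G b := m_nonneg _ _
    have hmb1 : m G b ≤ 1 := m_le_one _ _
    nlinarith [mul_le_mul_of_nonneg_left h2.le h0w',
      mul_le_mul_of_nonneg_right hw'.le hmb0,
      mul_le_mul_of_nonneg_right hw'W he.le]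


lemma bddAbove_image {a0 a1 : ℝ} (w : ℝ → ℝ)
    (hw_mono : MonotoneOn w (Set.Icc a0 a1)) (hw_nonneg : ∀ x ∈ Set.Icc a0 a1, 0 ≤ w x)
    (ha : a0 ≤ a1) (G : ProbabilityMeasure (Set.Icc θl θu)) :
    BddAbove ((fun x => w x * m G x) '' Set.Icc a0 a1) := by
  refine ⟨w a1, ?_⟩
  rintro _ ⟨x, hx, rfl⟩
  have h1 : w x * m G x ≤ w x := mul_le_of_le_one_right (hw_nonneg x hx) (m_le_one G x)
  exact h1.trans (hw_mono hx (Set.right_mem_Icc.mpr ha) hx.2)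

lemma image_nonempty {a0 a1 : ℝ} (w : ℝ → ℝ) (ha : a0 ≤ a1)
    (G : ProbabilityMeasure (Set.Icc θl θu)) :
    ((fun x => w x * m G x) '' Set.Icc a0 a1).Nonempty :=
  ⟨w a0 * m G a0, Set.mem_image_of_mem _ (Set.left_mem_Icc.mpr ha)⟩

lemma exists_max {a0 a1 : ℝ} (ha : a0 ≤ a1) (w : ℝ → ℝ)
    (hw_cont : ContinuousOn w (Set.Icc a0 a1))
    (hw_mono : MonotoneOn w (Set.Icc a0 a1)) (hw_nonneg : ∀ x ∈ Set.Icc a0 a1, 0 ≤ w x)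
    (G : ProbabilityMeasure (Set.Icc θl θu)) :
    ∃ a ∈ Set.Icc a0 a1,
      sSup ((fun x => w x * m G x) '' Set.Icc a0 a1) ≤ w a * m G a := by
  set f := fun x => w x * m G x with hf
  set s := sSup (f '' Set.Icc a0 a1) with hs
  have hne := image_nonempty (θl := θl) (θu := θu) w ha G
  have hex : ∀ k : ℕ, ∃ x ∈ Set.Icc a0 a1, s - 1 / (k + 1) < f x := by
    intro k
    have hpos : (0:ℝ) < 1 / (k + 1) := by positivity
    obtain ⟨y, hy, hlt⟩ := exists_lt_of_lt_csSup hne (show s - 1 / (k + 1) < s by linarith)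
    obtain ⟨x, hx, rfl⟩ := hy
    exact ⟨x, hx, hlt⟩
  choose x hxA hxf using hex
  obtain ⟨aM, haM, φ, hφ, hφt⟩ := (isCompact_Icc).tendsto_subseq hxA
  refine ⟨aM, haM, le_of_forall_pos_le_add fun ε hε => ?_⟩
  have hε2 : 0 < ε / 2 := by linarith
  have hub := key_ub a0 a1 w hw_cont hw_mono hw_nonneg (fun _ => G) G
    tendsto_const_nhds (fun k => x (φ k)) aM (fun k => hxA (φ k)) haM hφt hε2
  have h2 : ∀ᶠ k : ℕ in atTop, (1:ℝ) / (k + 1) < ε / 2 :=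
    tendsto_one_div_add_atTop_nhds_zero_nat.eventually (eventually_lt_nhds hε2)
  obtain ⟨k, hk1, hk2⟩ := (hub.and h2).exists
  have h3 : s - 1 / (φ k + 1) < f (x (φ k)) := hxf (φ k)
  have hφk : (1:ℝ) / (φ k + 1) ≤ 1 / (k + 1) := by
    apply one_div_le_one_div_of_le (by positivity)
    have hk : k ≤ φ k := hφ.le_apply
    have : (k:ℝ) ≤ φ k := by exact_mod_cast hk
    linarith
  have : f (x (φ k)) < w aM * m G aM + ε / 2 := hk1
  linarith

end MonopolyAux

open MonopolyAux

/-- The supremum of `Π(·, G)` over `A = [a0, a1]` is attained, the value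
function `V(G) = max_{a ∈ A} Π(a, G)` is continuous for the weak-* topology, and the
maximizer correspondence has closed graph. -/
theorem monopolyProfit_max_continuous_closedGraph
    (θl θu a0 a1 : ℝ) (hθ : θl ≤ θu) (ha : a0 ≤ a1) (ha0 : a0 ≤ θl)
    (w : ℝ → ℝ) (hw_cont : ContinuousOn w (Set.Icc a0 a1))
    (hw_mono : StrictMonoOn w (Set.Icc a0 a1))
    (hw_nonneg : ∀ a ∈ Set.Icc a0 a1, 0 ≤ w a) :
    (∀ G : ProbabilityMeasure (Set.Icc θl θu),
      ∃ a ∈ Set.Icc a0 a1, ∀ b ∈ Set.Icc a0 a1,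
        monopolyProfit θl θu w b G ≤ monopolyProfit θl θu w a G) ∧
    Continuous (fun G : ProbabilityMeasure (Set.Icc θl θu) =>
      sSup ((fun a => monopolyProfit θl θu w a G) '' Set.Icc a0 a1)) ∧
    (∀ (Gn : ℕ → ProbabilityMeasure (Set.Icc θl θu))
       (G : ProbabilityMeasure (Set.Icc θl θu)) (an : ℕ → ℝ) (a : ℝ),
       Tendsto Gn atTop (𝓝 G) → Tendsto an atTop (𝓝 a) →
       (∀ n, an n ∈ Set.Icc a0 a1 ∧ ∀ b ∈ Set.Icc a0 a1,
          monopolyProfit θl θu w b (Gn n) ≤ monopolyProfit θl θu w (an n) (Gn n)) →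
       a ∈ Set.Icc a0 a1 ∧ ∀ b ∈ Set.Icc a0 a1,
          monopolyProfit θl θu w b G ≤ monopolyProfit θl θu w a G) := by

  have hw_mono' : MonotoneOn w (Set.Icc a0 a1) := hw_mono.monotoneOn
  have hmax : ∀ G : ProbabilityMeasure (Set.Icc θl θu),
      ∃ a ∈ Set.Icc a0 a1, ∀ b ∈ Set.Icc a0 a1,
        monopolyProfit θl θu w b G ≤ monopolyProfit θl θu w a G := by
    intro G
    obtain ⟨a, haA, hs⟩ := exists_max (θl := θl) (θu := θu) ha w hw_cont hw_mono' hw_nonneg G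
    refine ⟨a, haA, fun b hb => ?_⟩
    have h2 : w b * m G b ≤ sSup ((fun x => w x * m G x) '' Set.Icc a0 a1) :=
      le_csSup (bddAbove_image w hw_mono' hw_nonneg ha G) (Set.mem_image_of_mem _ hb)
    exact (h2.trans hs : w b * m G b ≤ w a * m G a)
  refine ⟨hmax, ?_, ?_⟩
  · apply SeqContinuous.continuous
    intro Gn G hGn
    set V := fun (H : ProbabilityMeasure (Set.Icc θl θu)) =>
      sSup ((fun x => w x * m H x) '' Set.Icc a0 a1) with hVdef
    show Tendsto (fun n => V (Gn n)) atTop (𝓝 (V G))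
    rw [Metric.tendsto_atTop]
    intro ε hε
    have hε2 : 0 < ε / 2 := by linarith
    have hU : ∀ᶠ n in atTop, V (Gn n) < V G + ε / 2 := by
      by_contra hcon
      rw [Filter.not_eventually] at hcon
      obtain ⟨φ, hφ, hφP⟩ := Filter.extraction_of_frequently_atTop hcon
      push_neg at hφP
      have hc : ∀ n, ∃ c ∈ Set.Icc a0 a1,
          V (Gn (φ n)) ≤ w c * m (Gn (φ n)) c :=
        fun n => exists_max ha w hw_cont hw_mono' hw_nonneg (Gn (φ n))
      choose c hcA hcV using hc
      obtain ⟨aM, haM, ψ, hψ, hψt⟩ := isCompact_Icc.tendsto_subseq hcA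
      have hGt : Tendsto (fun k => Gn (φ (ψ k))) atTop (𝓝 G) :=
        hGn.comp (hφ.comp hψ).tendsto_atTop
      have hub := key_ub a0 a1 w hw_cont hw_mono' hw_nonneg
        (fun k => Gn (φ (ψ k))) G hGt (fun k => c (ψ k)) aM (fun k => hcA (ψ k)) haM hψt hε2
      obtain ⟨k, hk⟩ := hub.exists
      have hle : w aM * m G aM ≤ V G :=
        le_csSup (bddAbove_image w hw_mono' hw_nonneg ha G) (Set.mem_image_of_mem _ haM)
      have hp := hφP (ψ k)
      have hv := hcV (ψ k)
      linarith
    have hL : ∀ᶠ n in atTop, V G - ε / 2 < V (Gn n) := by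
      have hne := image_nonempty (θl := θl) (θu := θu) w ha G
      have hε4 : 0 < ε / 4 := by linarith
      obtain ⟨y, hy, hlt⟩ := exists_lt_of_lt_csSup hne (show V G - ε / 4 < V G by linarith)
      obtain ⟨b, hb, rfl⟩ := hy
      obtain ⟨b', hb'A, hev⟩ := key_lb ha0 ha w hw_cont hw_mono' hw_nonneg Gn G hGn b hb hε4
      filter_upwards [hev] with n hn
      have hle : w b' * m (Gn n) b' ≤ V (Gn n) :=
        le_csSup (bddAbove_image w hw_mono' hw_nonneg ha (Gn n)) (Set.mem_image_of_mem _ hb'A)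
      linarith
    obtain ⟨N, hN⟩ := Filter.eventually_atTop.mp (hU.and hL)
    refine ⟨N, fun n hn => ?_⟩
    obtain ⟨h1, h2⟩ := hN n hn
    rw [Real.dist_eq, abs_lt]
    constructor <;> linarith
  · intro Gn G an a hGn hat hmaxn
    have haA : a ∈ Set.Icc a0 a1 :=
      isClosed_Icc.mem_of_tendsto hat (Filter.Eventually.of_forall fun n => (hmaxn n).1)
    refine ⟨haA, fun b hb => ?_⟩
    show w b * m G b ≤ w a * m G a
    refine le_of_forall_pos_le_add fun ε hε => ?_
    have hε2 : 0 < ε / 2 := by linarith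
    obtain ⟨b', hb'A, hev⟩ := key_lb ha0 ha w hw_cont hw_mono' hw_nonneg Gn G hGn b hb hε2
    have hub := key_ub a0 a1 w hw_cont hw_mono' hw_nonneg Gn G hGn an a
      (fun n => (hmaxn n).1) haA hat hε2
    obtain ⟨n, h1, h2⟩ := (hev.and hub).exists
    have h3 : w b' * m (Gn n) b' ≤ w (an n) * m (Gn n) (an n) := (hmaxn n).2 b' hb'A
    linarith
end

section
/- Suppose ā ∈ Θ maximizes π_G over Θ and every maximizer of π_G over Θ is ≤ ā. Let κ ∈ (0,1) and define H on Borel sets B ⊆ Θ by H(B) := (G(B) − κ·G(B ∩ [θ̲, ā))) / (1 − κ·G([θ̲, ā))). Then H is a Borel probability measure on Θ, H is absolutely continuous with respect to G with Radon–Nikodym density bounded above by 1/(1−κ), and ā is the unique maximizer over Θ of the function a ↦ π_H(a) := w(a) · H({θ ∈ Θ : a ≤ θ}). -/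
open MeasureTheory
open scoped ENNReal

/-- The profit `π_μ(a) = w(a) · μ({θ : a ≤ θ})` on the type space `Θ = [θl, θu]`. -/
noncomputable def profitOf {θl θu : ℝ} (w : Set.Icc θl θu → ℝ)
    (μ : Measure (Set.Icc θl θu)) (a : Set.Icc θl θu) : ℝ :=
  w a * (μ {θ : Set.Icc θl θu | a ≤ θ}).toReal

/-- Shifting a mass `κ` of the belief `G` from below the largest
maximizer `ā` produces a probability measure `H ≪ G` with density at most `1/(1-κ)`
for which `ā` is the *unique* maximizer of `π_H`. -/
theorem unique_maximizer_of_shifted_belief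
    (θl θu : ℝ) (hθ : θl ≤ θu)
    (G : Measure (Set.Icc θl θu)) [IsProbabilityMeasure G]
    (w : Set.Icc θl θu → ℝ) (hw_mono : StrictMono w) (hw_pos : ∀ x, 0 < w x)
    (abar : Set.Icc θl θu)
    (habar_max : ∀ c : Set.Icc θl θu, profitOf w G c ≤ profitOf w G abar)
    (habar_top : ∀ b : Set.Icc θl θu,
      (∀ c : Set.Icc θl θu, profitOf w G c ≤ profitOf w G b) → b ≤ abar)
    (κ : ℝ) (hκ0 : 0 < κ) (hκ1 : κ < 1) :
    ∃ H : Measure (Set.Icc θl θu),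
      (∀ B : Set (Set.Icc θl θu), MeasurableSet B →
        H B = (G B - ENNReal.ofReal κ * G (B ∩ {θ : Set.Icc θl θu | θ < abar})) /
          (1 - ENNReal.ofReal κ * G {θ : Set.Icc θl θu | θ < abar})) ∧
      IsProbabilityMeasure H ∧
      H ≪ G ∧
      (∀ᵐ θ ∂G, H.rnDeriv G θ ≤ ENNReal.ofReal (1 / (1 - κ))) ∧
      (∀ c : Set.Icc θl θu, profitOf w H c ≤ profitOf w H abar) ∧
      (∀ b : Set.Icc θl θu, (∀ c : Set.Icc θl θu, profitOf w H c ≤ profitOf w H b) →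
        b = abar) := by
  classical
  set S : Set (Set.Icc θl θu) := {θ | θ < abar} with hS_def
  have hS : MeasurableSet S := by
    have hEq : S = Subtype.val ⁻¹' Set.Iio (abar : ℝ) := by
      ext θ; simp [hS_def, Subtype.coe_lt_coe]
    rw [hEq]
    exact measurableSet_Iio.preimage measurable_subtype_coe
  have hIa_meas : ∀ a : Set.Icc θl θu, MeasurableSet {θ : Set.Icc θl θu | a ≤ θ} := by
    intro a
    have hEq : {θ : Set.Icc θl θu | a ≤ θ} = Subtype.val ⁻¹' Set.Ici (a : ℝ) := by
      ext θ; simp [Subtype.coe_le_coe]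
    rw [hEq]
    exact measurableSet_Ici.preimage measurable_subtype_coe
  set κ' : ℝ≥0∞ := ENNReal.ofReal κ with hκ'_def
  have hκ'1 : κ' < 1 := by
    rw [hκ'_def]
    exact ENNReal.ofReal_lt_one.mpr hκ1
  have hκ'top : κ' ≠ ∞ := ENNReal.ofReal_ne_top
  set c : ℝ≥0∞ := 1 - κ' * G S with hc_def
  have hκGS_le : κ' * G S ≤ κ' := by
    calc κ' * G S ≤ κ' * 1 := by
          exact mul_le_mul_right prob_le_one _
      _ = κ' := mul_one _
  have hc_low : ENNReal.ofReal (1 - κ) ≤ c := by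
    have h1 : (1 : ℝ≥0∞) - κ' ≤ c := tsub_le_tsub_left hκGS_le 1
    have h2 : ENNReal.ofReal (1 - κ) = 1 - κ' := by
      rw [hκ'_def, ENNReal.ofReal_sub _ hκ0.le, ENNReal.ofReal_one]
    rw [h2]; exact h1
  have h1κ_pos : (0:ℝ) < 1 - κ := by linarith
  have hc0 : c ≠ 0 := by
    intro h
    rw [h] at hc_low
    simp [le_zero_iff, ENNReal.ofReal_eq_zero] at hc_low
    linarith
  have hc1 : c ≤ 1 := tsub_le_self
  have hctop : c ≠ ∞ := (lt_of_le_of_lt hc1 ENNReal.one_lt_top).ne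
  set f : Set.Icc θl θu → ℝ≥0∞ := S.piecewise (fun _ => ENNReal.ofReal (1 - κ)) 1 with hf_def
  have hf_meas : Measurable f := Measurable.piecewise hS measurable_const measurable_const
  have hf_le_one : ∀ θ, f θ ≤ 1 := by
    intro θ
    by_cases h : θ ∈ S
    · rw [hf_def, Set.piecewise_eq_of_mem _ _ _ h]
      exact ENNReal.ofReal_le_one.mpr (by linarith)
    · rw [hf_def, Set.piecewise_eq_of_notMem _ _ _ h, Pi.one_apply]
  -- the unnormalized measure
  have hWD : ∀ B : Set (Set.Icc θl θu), MeasurableSet B →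
      (G.withDensity f) B = G B - κ' * G (B ∩ S) := by
    intro B hB
    rw [withDensity_apply f hB]
    have h1 : ∫⁻ θ in B ∩ S, f θ ∂G = ENNReal.ofReal (1 - κ) * G (B ∩ S) := by
      rw [setLIntegral_congr_fun (hB.inter hS)
        (fun θ hθ' => ?_), setLIntegral_const]
      rw [hf_def]
      exact Set.piecewise_eq_of_mem _ _ _ hθ'.2
    have h2 : ∫⁻ θ in B \ S, f θ ∂G = G (B \ S) := by
      rw [setLIntegral_congr_fun (hB.diff hS)
        (fun θ hθ' => ?_), setLIntegral_const, one_mul]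
      rw [hf_def]
      exact Set.piecewise_eq_of_notMem _ _ _ hθ'.2
    rw [← lintegral_inter_add_diff f B hS, h1, h2]
    symm
    refine ENNReal.sub_eq_of_eq_add ?_ ?_
    · exact ENNReal.mul_ne_top hκ'top (measure_ne_top _ _)
    · have hadd : κ' + ENNReal.ofReal (1 - κ) = 1 := by
        rw [hκ'_def, ← ENNReal.ofReal_add hκ0.le (by linarith)]
        norm_num
      calc G B = G (B ∩ S) + G (B \ S) := (measure_inter_add_diff B hS).symm
        _ = 1 * G (B ∩ S) + G (B \ S) := by rw [one_mul]
        _ = (κ' + ENNReal.ofReal (1 - κ)) * G (B ∩ S) + G (B \ S) := by rw [hadd]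
        _ = ENNReal.ofReal (1 - κ) * G (B ∩ S) + G (B \ S) + κ' * G (B ∩ S) := by ring
  set H : Measure (Set.Icc θl θu) := c⁻¹ • G.withDensity f with hH_def
  have hH_apply : ∀ B : Set (Set.Icc θl θu), MeasurableSet B →
      H B = (G B - κ' * G (B ∩ S)) / c := by
    intro B hB
    rw [hH_def, Measure.smul_apply, smul_eq_mul, hWD B hB, div_eq_mul_inv, mul_comm]
  have hH_univ : H Set.univ = 1 := by
    rw [hH_apply _ MeasurableSet.univ, Set.univ_inter, measure_univ, ← hc_def]
    exact ENNReal.div_self hc0 hctop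
  have hprob : IsProbabilityMeasure H := ⟨hH_univ⟩
  have hac : H ≪ G := by
    intro s hs
    have h0 : G.withDensity f s = 0 := withDensity_absolutelyContinuous G f hs
    rw [hH_def, Measure.smul_apply, h0, smul_eq_mul, mul_zero]
  -- real versions
  set cR : ℝ := c.toReal with hcR_def
  have hcR_pos : 0 < cR := ENNReal.toReal_pos hc0 hctop
  have hHreal : ∀ a : Set.Icc θl θu,
      (H {θ : Set.Icc θl θu | a ≤ θ}).toReal =
        ((G {θ : Set.Icc θl θu | a ≤ θ}).toReal
          - κ * (G ({θ : Set.Icc θl θu | a ≤ θ} ∩ S)).toReal) / cR := by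
    intro a
    have hle : κ' * G ({θ : Set.Icc θl θu | a ≤ θ} ∩ S) ≤ G {θ : Set.Icc θl θu | a ≤ θ} := by
      calc κ' * G ({θ : Set.Icc θl θu | a ≤ θ} ∩ S)
          ≤ 1 * G ({θ : Set.Icc θl θu | a ≤ θ} ∩ S) := mul_le_mul_left hκ'1.le _
        _ = G ({θ : Set.Icc θl θu | a ≤ θ} ∩ S) := one_mul _
        _ ≤ G {θ : Set.Icc θl θu | a ≤ θ} := measure_mono Set.inter_subset_left
    rw [hH_apply _ (hIa_meas a), ENNReal.toReal_div,
      ENNReal.toReal_sub_of_le hle (measure_ne_top _ _), ENNReal.toReal_mul, hκ'_def,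
      ENNReal.toReal_ofReal hκ0.le]
  have hprofitH : ∀ a : Set.Icc θl θu,
      profitOf w H a = w a * (((G {θ : Set.Icc θl θu | a ≤ θ}).toReal
        - κ * (G ({θ : Set.Icc θl θu | a ≤ θ} ∩ S)).toReal) / cR) := by
    intro a; rw [profitOf, hHreal a]
  have habar_inter : {θ : Set.Icc θl θu | abar ≤ θ} ∩ S = ∅ := by
    ext θ
    simp only [Set.mem_inter_iff, Set.mem_setOf_eq, hS_def, Set.mem_empty_iff_false, iff_false]
    rintro ⟨h1, h2⟩
    exact absurd (lt_of_le_of_lt h1 h2) (lt_irrefl _)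
  have hpH_abar : profitOf w H abar = profitOf w G abar / cR := by
    rw [hprofitH abar, habar_inter, measure_empty]
    simp [profitOf, mul_div_assoc]
  have hkey_le : ∀ a : Set.Icc θl θu, profitOf w H a ≤ profitOf w G a / cR := by
    intro a
    rw [hprofitH a, profitOf, mul_div_assoc]
    apply mul_le_mul_of_nonneg_left _ (hw_pos a).le
    apply div_le_div_of_nonneg_right _ hcR_pos.le
    have : 0 ≤ κ * (G ({θ : Set.Icc θl θu | a ≤ θ} ∩ S)).toReal := by positivity
    linarith
  have hmax : ∀ a : Set.Icc θl θu, profitOf w H a ≤ profitOf w H abar := by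
    intro a
    calc profitOf w H a ≤ profitOf w G a / cR := hkey_le a
      _ ≤ profitOf w G abar / cR := by
          apply div_le_div_of_nonneg_right (habar_max a) hcR_pos.le
      _ = profitOf w H abar := hpH_abar.symm
  -- rnDeriv bound
  have hrn : ∀ᵐ θ ∂G, H.rnDeriv G θ ≤ ENNReal.ofReal (1 / (1 - κ)) := by
    have hHwd : H = G.withDensity (c⁻¹ • f) := by
      rw [hH_def, withDensity_smul _ hf_meas]
    have hrd := Measure.rnDeriv_withDensity G (Measurable.const_smul hf_meas c⁻¹)
    rw [← hHwd] at hrd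
    filter_upwards [hrd] with θ hθ'
    rw [hθ']
    have h1 : (c⁻¹ • f) θ ≤ c⁻¹ := by
      simp only [Pi.smul_apply, smul_eq_mul]
      calc c⁻¹ * f θ ≤ c⁻¹ * 1 := mul_le_mul_right (hf_le_one θ) _
        _ = c⁻¹ := mul_one _
    have h2 : c⁻¹ ≤ (ENNReal.ofReal (1 - κ))⁻¹ := ENNReal.inv_le_inv' hc_low
    have h3 : (ENNReal.ofReal (1 - κ))⁻¹ = ENNReal.ofReal (1 / (1 - κ)) := by
      rw [one_div, ENNReal.ofReal_inv_of_pos h1κ_pos]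
    exact le_trans h1 (h3 ▸ h2)
  refine ⟨H, fun B hB => hH_apply B hB, hprob, hac, hrn, hmax, ?_⟩
  -- uniqueness
  intro b hb
  set Ib := {θ : Set.Icc θl θu | b ≤ θ} with hIb_def
  set gb : ℝ := (G Ib).toReal with hgb_def
  set sb : ℝ := (G (Ib ∩ S)).toReal with hsb_def
  have hsb_nonneg : 0 ≤ sb := ENNReal.toReal_nonneg
  have h1 : profitOf w G abar / cR ≤ w b * ((gb - κ * sb) / cR) := by
    rw [← hpH_abar, ← hprofitH b]; exact hb abar
  have h1' : profitOf w G abar ≤ w b * (gb - κ * sb) := by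
    rw [← mul_div_assoc] at h1
    have h1'' := (div_le_div_iff₀ hcR_pos hcR_pos).mp h1
    exact le_of_mul_le_mul_right h1'' hcR_pos
  have h2 : w b * gb ≤ profitOf w G abar := habar_max b
  have hwb_pos : 0 < w b := hw_pos b
  have hsb0 : sb = 0 := by
    by_contra hne0
    have hpos : 0 < sb := lt_of_le_of_ne hsb_nonneg (Ne.symm hne0)
    have hp : 0 < w b * (κ * sb) := by positivity
    nlinarith [h1', h2]
  have hπb_ge : profitOf w G abar ≤ profitOf w G b := by
    rw [hsb0, mul_zero, sub_zero] at h1'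
    exact h1'
  have hble : b ≤ abar := habar_top b (fun x => le_trans (habar_max x) hπb_ge)
  by_contra hne
  have hblt : b < abar := lt_of_le_of_ne hble hne
  -- G (Ib ∩ S) = 0
  have hGIbS : G (Ib ∩ S) = 0 := by
    have := (ENNReal.toReal_eq_zero_iff _).mp hsb0
    rcases this with h | h
    · exact h
    · exact absurd h (measure_ne_top _ _)
  have hsub1 : {θ : Set.Icc θl θu | abar ≤ θ} ⊆ Ib := fun θ hθ' => le_trans hble hθ'
  have hsub2 : Ib ⊆ (Ib ∩ S) ∪ {θ : Set.Icc θl θu | abar ≤ θ} := by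
    intro θ hθ'
    rcases lt_or_ge θ abar with h | h
    · exact Or.inl ⟨hθ', h⟩
    · exact Or.inr h
  have hGeq : G Ib = G {θ : Set.Icc θl θu | abar ≤ θ} := by
    apply le_antisymm
    · calc G Ib ≤ G ((Ib ∩ S) ∪ {θ : Set.Icc θl θu | abar ≤ θ}) := measure_mono hsub2
        _ ≤ G (Ib ∩ S) + G {θ : Set.Icc θl θu | abar ≤ θ} := measure_union_le _ _
        _ = G {θ : Set.Icc θl θu | abar ≤ θ} := by rw [hGIbS, zero_add]
    · exact measure_mono hsub1
  set gabar : ℝ := (G {θ : Set.Icc θl θu | abar ≤ θ}).toReal with hgabar_def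
  have hgb_eq : gb = gabar := by rw [hgb_def, hgabar_def, hGeq]
  -- G {abar ≤ θ} > 0
  have hbot_mem : θl ∈ Set.Icc θl θu := ⟨le_refl θl, hθ⟩
  have hbot_univ : {θ : Set.Icc θl θu | (⟨θl, hbot_mem⟩ : Set.Icc θl θu) ≤ θ} = Set.univ := by
    ext θ
    simp only [Set.mem_setOf_eq, Set.mem_univ, iff_true]
    exact Subtype.mk_le_mk.mpr θ.2.1
  have hπbot : profitOf w G ⟨θl, hbot_mem⟩ = w ⟨θl, hbot_mem⟩ := by
    rw [profitOf, hbot_univ, measure_univ, ENNReal.toReal_one, mul_one]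
  have hπabar_pos : 0 < profitOf w G abar := by
    calc (0:ℝ) < w ⟨θl, hbot_mem⟩ := hw_pos _
      _ = profitOf w G ⟨θl, hbot_mem⟩ := hπbot.symm
      _ ≤ profitOf w G abar := habar_max _
  have hgabar_pos : 0 < gabar := by
    have heq : profitOf w G abar = w abar * gabar := rfl
    nlinarith [hw_pos abar, ENNReal.toReal_nonneg (a := G {θ : Set.Icc θl θu | abar ≤ θ})]
  have hwlt : w b < w abar := hw_mono hblt
  have : profitOf w G b < profitOf w G abar := by
    have heq1 : profitOf w G b = w b * gb := rfl
    have heq2 : profitOf w G abar = w abar * gabar := rfl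
    rw [heq1, heq2, hgb_eq]
    exact mul_lt_mul_of_pos_right hwlt hgabar_pos
  linarith
end

section
/- The function u_R : A × Θ → ℝ defined by u_R(a, θ) := max_{D ∈ S(a,θ)} u(D, a, θ) is upper semicontinuous on A × Θ, where A carries the supremum-norm topology. (For every a ∈ A and θ ∈ Θ the set S(a, θ) is nonempty and compact, so the maximum is attained.) -/
open Set

/-- Convex combinations of points of `[θl, θu]` stay in `[θl, θu]`. -/
theorem comb_mem_Icc {θl θu : ℝ} (x y : Set.Icc θl θu) {t : ℝ} (h0 : 0 ≤ t) (h1 : t ≤ 1) :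
    t * (x : ℝ) + (1 - t) * (y : ℝ) ∈ Set.Icc θl θu := by
  constructor
  · nlinarith [x.2.1, y.2.1]
  · nlinarith [x.2.2, y.2.2]

/-- A continuous function on `[θl, θu]` is convex. -/
def IsConvexMap {θl θu : ℝ} (a : C(Set.Icc θl θu, ℝ)) : Prop :=
  ∀ (x y : Set.Icc θl θu) (t : ℝ) (h0 : 0 ≤ t) (h1 : t ≤ 1),
    a ⟨t * (x : ℝ) + (1 - t) * (y : ℝ), comb_mem_Icc x y h0 h1⟩ ≤ t * a x + (1 - t) * a y

/-- The set `A` of indirect utilities: continuous functions on `Θ = [θl, θu]` that take the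
value `c0` at `θl`, and are decreasing, convex, and `D0`-Lipschitz. -/
def indirectUtilities (θl θu : ℝ) (h : θl ≤ θu) (c0 D0 : ℝ) :
    Set C(Set.Icc θl θu, ℝ) :=
  {a | a ⟨θl, Set.left_mem_Icc.mpr h⟩ = c0 ∧ Antitone a ∧ IsConvexMap a ∧
    LipschitzWith (Real.toNNReal D0) a}

/-- The subgradient-feasible set `S(a, θ) = {D ∈ [0, D0] : a(θ') ≥ a(θ) − D(θ' − θ) ∀ θ'}`. -/
def subgradientSet {θl θu : ℝ} (D0 : ℝ) (a : C(Set.Icc θl θu, ℝ))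
    (θ : Set.Icc θl θu) : Set ℝ :=
  {D | D ∈ Set.Icc (0 : ℝ) D0 ∧
    ∀ θ' : Set.Icc θl θu, a θ - D * ((θ' : ℝ) - (θ : ℝ)) ≤ a θ'}

/-- The insurer's payoff `u(D, a, θ)`. -/
def insurerPayoff (wbar ℓ : ℝ) (g : ℝ → ℝ) {θl θu : ℝ} (D : ℝ)
    (a : C(Set.Icc θl θu, ℝ)) (θ : Set.Icc θl θu) : ℝ :=
  wbar - (θ : ℝ) * ℓ - (1 - (θ : ℝ)) * g (a θ + (θ : ℝ) * D) -
    (θ : ℝ) * g (a θ - (1 - (θ : ℝ)) * D)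

/-- The insurer's reduced payoff `u_R(a, θ) = max_{D ∈ S(a, θ)} u(D, a, θ)`. -/
noncomputable def insurerReducedPayoff (wbar ℓ : ℝ) (g : ℝ → ℝ) (D0 : ℝ) {θl θu : ℝ}
    (a : C(Set.Icc θl θu, ℝ)) (θ : Set.Icc θl θu) : ℝ :=
  sSup ((fun D => insurerPayoff wbar ℓ g D a θ) '' subgradientSet D0 a θ)

/-! Berge's maximum theorem. The condition `D ∈ S(a, θ)` is a conjunction of closed conditions
in `(a, θ, D)`, because evaluation `(a, θ) ↦ a θ` is continuous for the sup norm; so the graph of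
`S` is closed and lies in `A × Θ × [0, D₀]`. If `u_R(a, θ) < y`, then `u(D, ·) < y` near `(a, θ)`
for every `D ∈ S(a, θ)`, while every other `D ∈ [0, D₀]` lies off the graph near `(a, θ)`;
compactness of `[0, D₀]` (tube lemma) makes this uniform in `D`. For `a ∈ A` the set `S(a, θ)`
is nonempty by convexity, so the supremum defining `u_R` is a maximum. -/

open Topology

theorem IsCompact.upperSemicontinuousOn_sSup_image {X Y α : Type*} [TopologicalSpace X]
    [TopologicalSpace Y] [ConditionallyCompleteLinearOrder α] [TopologicalSpace α]
    [ClosedIciTopology α] {f : X → Y → α} (hf : Continuous (Function.uncurry f))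
    {S : X → Set Y} {K : Set Y} (hK : IsCompact K) (hSK : ∀ x, S x ⊆ K)
    (hS : IsClosed {q : X × Y | q.2 ∈ S q.1}) {s : Set X} (hs : ∀ x ∈ s, (S x).Nonempty) :
    UpperSemicontinuousOn (fun x => sSup (f x '' S x)) s := by
  have hSc : ∀ x, IsCompact (S x) := fun x =>
    hK.of_isClosed_subset (hS.preimage (Continuous.prodMk_right x)) (hSK x)
  have hfx : ∀ x, ContinuousOn (f x) (S x) := fun x =>
    (hf.comp (Continuous.prodMk_right x)).continuousOn
  intro x hx y hy
  rw [(hSc x).sSup_lt_iff_of_continuous (hs x hx) (hfx x)] at hy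
  have hnear : ∀ D ∈ K, ∀ᶠ q : X × Y in 𝓝 (x, D), q.2 ∉ S q.1 ∨ f q.1 q.2 < y := by
    intro D _
    by_cases hD : D ∈ S x
    · exact Filter.mem_of_superset ((isOpen_Iio.preimage hf).mem_nhds (hy D hD))
        fun _ h => Or.inr h
    · exact Filter.mem_of_superset (hS.isOpen_compl.mem_nhds hD) fun _ h => Or.inl h
  filter_upwards [nhdsWithin_le_nhds (hK.eventually_forall_of_forall_eventually
    (P := fun x' D => D ∉ S x' ∨ f x' D < y) hnear),
    self_mem_nhdsWithin] with x' hx' hx's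
  exact ((hSc x').sSup_lt_iff_of_continuous (hs x' hx's) (hfx x') y).2
    fun D hD => (hx' D (hSK x' hD)).resolve_left (not_not.2 hD)

section Subgradient

variable {θl θu : ℝ}

theorem isClosed_setOf_mem_subgradientSet (D0 : ℝ) :
    IsClosed {q : (C(Icc θl θu, ℝ) × Icc θl θu) × ℝ | q.2 ∈ subgradientSet D0 q.1.1 q.1.2} := by
  have hset : {q : (C(Icc θl θu, ℝ) × Icc θl θu) × ℝ | q.2 ∈ subgradientSet D0 q.1.1 q.1.2} =
      Prod.snd ⁻¹' Icc 0 D0 ∩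
        ⋂ θ' : Icc θl θu, {q | q.1.1 q.1.2 - q.2 * ((θ' : ℝ) - q.1.2) ≤ q.1.1 θ'} := by
    ext; simp [subgradientSet]
  rw [hset]
  exact (isClosed_Icc.preimage continuous_snd).inter
    (isClosed_iInter fun θ' => isClosed_le (by fun_prop) (by fun_prop))

theorem isCompact_subgradientSet (D0 : ℝ) (a : C(Icc θl θu, ℝ)) (θ : Icc θl θu) :
    IsCompact (subgradientSet D0 a θ) :=
  isCompact_Icc.of_isClosed_subset
    ((isClosed_setOf_mem_subgradientSet D0).preimage (Continuous.prodMk_right (a, θ)))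
    fun _ hD => hD.1

theorem IsConvexMap.convexOn_IccExtend {a : C(Icc θl θu, ℝ)} (hC : IsConvexMap a)
    (h : θl ≤ θu) : ConvexOn ℝ (Icc θl θu) (IccExtend h a) := by
  refine ⟨convex_Icc _ _, fun x hx y hy s t hs ht hst => ?_⟩
  obtain rfl : t = 1 - s := by linarith
  have hmem := comb_mem_Icc ⟨x, hx⟩ ⟨y, hy⟩ hs (by linarith)
  simpa [IccExtend_of_mem _ _ hx, IccExtend_of_mem _ _ hy, IccExtend_of_mem _ _ hmem]
    using hC ⟨x, hx⟩ ⟨y, hy⟩ s hs (by linarith)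

theorem subgradientSet_nonempty {D0 : ℝ} (hD0 : 0 ≤ D0) {a : C(Icc θl θu, ℝ)} (hA : Antitone a)
    (hC : IsConvexMap a) (hL : LipschitzWith (Real.toNNReal D0) a) (θ : Icc θl θu) :
    (subgradientSet D0 a θ).Nonempty := by
  -- `sSup T` is a subgradient: it is at most `D0` by the Lipschitz bound, and at most every
  -- negated left difference quotient by convexity (three-chord lemma).
  set T : Set ℝ := insert 0 ((fun θ' : Icc θl θu => (a θ - a θ') / (θ' - θ)) '' {θ' | θ < θ'})
  have hT_le_D0 : ∀ t ∈ T, t ≤ D0 := by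
    rintro _ (rfl | ⟨θ', hθ' : (θ : ℝ) < θ', rfl⟩)
    · exact hD0
    · have hlip := hL.dist_le_mul θ θ'
      rw [Real.dist_eq, Subtype.dist_eq, Real.dist_eq, Real.coe_toNNReal _ hD0,
        abs_of_neg (sub_neg.2 hθ')] at hlip
      rw [div_le_iff₀ (sub_pos.2 hθ')]
      linarith [le_abs_self (a θ - a θ')]
  have hT_le_leftSlope : ∀ θ' : Icc θl θu, (θ' : ℝ) < θ →
      ∀ t ∈ T, t ≤ (a θ' - a θ) / (θ - θ') := by
    rintro θ₁ h₁ _ (rfl | ⟨θ₂, h₂ : (θ : ℝ) < θ₂, rfl⟩)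
    · exact div_nonneg (sub_nonneg.2 (hA h₁.le)) (sub_nonneg.2 h₁.le)
    · have hslope := (hC.convexOn_IccExtend (θ.2.1.trans θ.2.2)).slope_mono_adjacent
        θ₁.2 θ₂.2 h₁ h₂
      simp only [IccExtend_val] at hslope
      have e₁ : (a θ₁ - a θ) / ((θ : ℝ) - θ₁) = -((a θ - a θ₁) / ((θ : ℝ) - θ₁)) := by ring
      have e₂ : (a θ - a θ₂) / ((θ₂ : ℝ) - θ) = -((a θ₂ - a θ) / ((θ₂ : ℝ) - θ)) := by ring
      dsimp only
      rw [e₁, e₂]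
      exact neg_le_neg hslope
  have hbdd : BddAbove T := ⟨D0, hT_le_D0⟩
  refine ⟨sSup T, ⟨le_csSup hbdd (mem_insert _ _), csSup_le (insert_nonempty _ _) hT_le_D0⟩,
    fun θ' => ?_⟩
  rcases lt_trichotomy (θ' : ℝ) θ with h | h | h
  · have hle := csSup_le (insert_nonempty _ _) (hT_le_leftSlope θ' h)
    rw [le_div_iff₀ (sub_pos.2 h)] at hle
    linarith
  · simp [Subtype.ext h]
  · have hle := le_csSup hbdd (mem_insert_of_mem _ ⟨θ', h, rfl⟩)
    rw [div_le_iff₀ (sub_pos.2 h)] at hle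
    linarith

end Subgradient

theorem continuous_insurerPayoff {θl θu : ℝ} (wbar ℓ : ℝ) {g : ℝ → ℝ} (hg : Continuous g) :
    Continuous fun q : (C(Icc θl θu, ℝ) × Icc θl θu) × ℝ =>
      insurerPayoff wbar ℓ g q.2 q.1.1 q.1.2 := by
  unfold insurerPayoff
  fun_prop

theorem insurerReducedPayoff_upperSemicontinuousOn_general
    (θl θu : ℝ) (h : θl ≤ θu) (c0 D0 : ℝ) (hD0 : 0 < D0)
    (wbar ℓ : ℝ) (g : ℝ → ℝ) (hg : Continuous g) :
    (∀ a ∈ indirectUtilities θl θu h c0 D0, ∀ θ : Set.Icc θl θu,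
      (subgradientSet D0 a θ).Nonempty ∧ IsCompact (subgradientSet D0 a θ) ∧
      ∃ D ∈ subgradientSet D0 a θ,
        (∀ D' ∈ subgradientSet D0 a θ,
          insurerPayoff wbar ℓ g D' a θ ≤ insurerPayoff wbar ℓ g D a θ) ∧
        insurerReducedPayoff wbar ℓ g D0 a θ = insurerPayoff wbar ℓ g D a θ) ∧
    UpperSemicontinuousOn
      (fun p : C(Set.Icc θl θu, ℝ) × Set.Icc θl θu =>
        insurerReducedPayoff wbar ℓ g D0 p.1 p.2)
      (indirectUtilities θl θu h c0 D0 ×ˢ (Set.univ : Set (Set.Icc θl θu))) := by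
  have hne : ∀ a ∈ indirectUtilities θl θu h c0 D0, ∀ θ, (subgradientSet D0 a θ).Nonempty :=
    fun a ⟨_, hA, hC, hL⟩ θ => subgradientSet_nonempty hD0.le hA hC hL θ
  have hu := continuous_insurerPayoff (θl := θl) (θu := θu) wbar ℓ hg
  refine ⟨fun a ha θ => ?_, ?_⟩
  · obtain ⟨D, hD, hsup, hmax⟩ := (isCompact_subgradientSet D0 a θ).exists_sSup_image_eq_and_ge
      (hne a ha θ) (hu.comp (Continuous.prodMk_right (a, θ))).continuousOn
    exact ⟨hne a ha θ, isCompact_subgradientSet D0 a θ, D, hD, hmax, hsup⟩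
  · exact isCompact_Icc.upperSemicontinuousOn_sSup_image
      (X := C(Icc θl θu, ℝ) × Icc θl θu) (f := fun p D => insurerPayoff wbar ℓ g D p.1 p.2)
      (S := fun p => subgradientSet D0 p.1 p.2) hu (fun _ _ hD => hD.1)
      (isClosed_setOf_mem_subgradientSet D0) fun p hp => hne p.1 hp.1 p.2

/-- On `A × Θ` the maximum defining `u_R` is attained (each `S(a, θ)` being
nonempty and compact), and `u_R` is upper semicontinuous for the supremum-norm topology. -/
theorem insurerReducedPayoff_upperSemicontinuousOn
    (θl θu : ℝ) (h0l : 0 < θl) (h : θl ≤ θu) (hu1 : θu < 1) (c0 D0 : ℝ) (hD0 : 0 < D0)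
    (wbar ℓ : ℝ) (g : ℝ → ℝ) (hg : Continuous g) :
    (∀ a ∈ indirectUtilities θl θu h c0 D0, ∀ θ : Set.Icc θl θu,
      (subgradientSet D0 a θ).Nonempty ∧ IsCompact (subgradientSet D0 a θ) ∧
      ∃ D ∈ subgradientSet D0 a θ,
        (∀ D' ∈ subgradientSet D0 a θ,
          insurerPayoff wbar ℓ g D' a θ ≤ insurerPayoff wbar ℓ g D a θ) ∧
        insurerReducedPayoff wbar ℓ g D0 a θ = insurerPayoff wbar ℓ g D a θ) ∧
    UpperSemicontinuousOn
      (fun p : C(Set.Icc θl θu, ℝ) × Set.Icc θl θu =>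
        insurerReducedPayoff wbar ℓ g D0 p.1 p.2)
      (indirectUtilities θl θu h c0 D0 ×ˢ (Set.univ : Set (Set.Icc θl θu))) :=
  insurerReducedPayoff_upperSemicontinuousOn_general θl θu h c0 D0 hD0 wbar ℓ g hg
end

section
/- Let X be a metric space, K a compact metric space, and u : X × K → ℝ upper semicontinuous. If x_n → x in X and G_n → G weakly, where G_n and G are Borel probability measures on K, then limsup_{n→∞} ∫_K u(x_n, θ) dG_n(θ) ≤ ∫_K u(x, θ) dG(θ). -/
open MeasureTheory Filter Topology
open scoped ENNReal Classical

/-- The integral of a function that is bounded above, with values in `[−∞, ∞)`: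
it equals the Bochner integral when `f` is integrable, and `−∞` otherwise. -/
noncomputable def upperIntegralEReal {K : Type*} [MeasurableSpace K]
    (f : K → ℝ) (μ : Measure K) : EReal :=
  if Integrable f μ then ((∫ θ, f θ ∂μ : ℝ) : EReal) else ⊥

lemma usc_bddAbove {α : Type*} [TopologicalSpace α] {f : α → ℝ}
    (hf : UpperSemicontinuous f) {S : Set α} (hS : IsCompact S) :
    ∃ M : ℝ, ∀ p ∈ S, f p ≤ M := by
  rcases S.eq_empty_or_nonempty with h | ⟨q0, hq0⟩
  · exact ⟨0, by simp [h]⟩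
  obtain ⟨t, htS, hcov⟩ := hS.elim_nhds_subcover (fun p => {q | f q < f p + 1})
    (fun p _ => hf p (f p + 1) (lt_add_one _))
  have htne : t.Nonempty := by
    rcases Set.mem_iUnion₂.1 (hcov hq0) with ⟨p, hp, _⟩
    exact ⟨p, hp⟩
  refine ⟨t.sup' htne (fun p => f p + 1), fun q hq => ?_⟩
  rcases Set.mem_iUnion₂.1 (hcov hq) with ⟨p, hp, hqp⟩
  exact le_trans (le_of_lt hqp) (Finset.le_sup' (fun p => f p + 1) hp)

/-- If `u : X × K → ℝ` is upper semicontinuous with `K` compact metric,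
`xₙ → x` and `Gₙ → G` weakly, then `limsup ∫ u(xₙ, θ) dGₙ ≤ ∫ u(x, θ) dG`
(integrals valued in `[−∞, ∞)`). -/
theorem limsup_integral_le_of_upperSemicontinuous
    {X K : Type*} [MetricSpace X] [MetricSpace K] [CompactSpace K]
    [MeasurableSpace K] [BorelSpace K]
    (u : X → K → ℝ) (hu : UpperSemicontinuous (fun p : X × K => u p.1 p.2))
    (x : ℕ → X) (x0 : X) (hx : Tendsto x atTop (𝓝 x0))
    (G : ℕ → ProbabilityMeasure K) (G0 : ProbabilityMeasure K)
    (hG : Tendsto G atTop (𝓝 G0)) :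
    limsup (fun n => upperIntegralEReal (u (x n)) (G n : Measure K)) atTop ≤
      upperIntegralEReal (u x0) (G0 : Measure K) := by
  haveI : Nonempty K := G0.nonempty
  set u' : X × K → ℝ := fun p => u p.1 p.2 with hu'
  set S : Set (X × K) := (insert x0 (Set.range x)) ×ˢ (Set.univ : Set K) with hSdef
  have hS : IsCompact S := (hx.isCompact_insert_range).prod isCompact_univ
  have hx0S : ∀ θ : K, (x0, θ) ∈ S := fun θ => ⟨Set.mem_insert _ _, trivial⟩
  have hxnS : ∀ (n : ℕ) (θ : K), (x n, θ) ∈ S :=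
    fun n θ => ⟨Set.mem_insert_of_mem _ ⟨n, rfl⟩, trivial⟩
  have hSne : S.Nonempty := ⟨(x0, Classical.arbitrary K), hx0S _⟩
  obtain ⟨M, hM⟩ := usc_bddAbove hu hS
  -- Lipschitz upper approximations (Moreau–Yosida type)
  set f : ℕ → X × K → ℝ := fun m p => sSup ((fun q => u' q - m * dist p q) '' S) with hfdef
  have himne : ∀ (m : ℕ) (p : X × K), ((fun q => u' q - m * dist p q) '' S).Nonempty :=
    fun m p => hSne.image _
  have hterm_le : ∀ (m : ℕ) (p q : X × K), q ∈ S → u' q - m * dist p q ≤ M := by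
    intro m p q hq
    have h1 := hM q hq
    have h2 : (0:ℝ) ≤ (m : ℝ) * dist p q :=
      mul_nonneg (Nat.cast_nonneg m) dist_nonneg
    linarith
  have hbdd : ∀ (m : ℕ) (p : X × K), BddAbove ((fun q => u' q - m * dist p q) '' S) := by
    intro m p
    refine ⟨M, fun y hy => ?_⟩
    rcases hy with ⟨q, hq, rfl⟩
    exact hterm_le m p q hq
  have hf_le_M : ∀ (m : ℕ) (p : X × K), f m p ≤ M := fun m p =>
    csSup_le (himne m p) (by rintro y ⟨q, hq, rfl⟩; exact hterm_le m p q hq)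
  have hle_f : ∀ (m : ℕ) (p : X × K), p ∈ S → u' p ≤ f m p := by
    intro m p hp
    have hmem : u' p - m * dist p p ∈ (fun q => u' q - m * dist p q) '' S := ⟨p, hp, rfl⟩
    simpa using le_csSup (hbdd m p) hmem
  have hf_anti : ∀ p : X × K, Antitone fun m => f m p := by
    intro p
    refine antitone_nat_of_succ_le fun m => ?_
    refine csSup_le (himne _ p) ?_
    rintro y ⟨q, hq, rfl⟩
    dsimp only
    have h1 : u' q - (m:ℝ) * dist p q ≤ f m p := le_csSup (hbdd m p) ⟨q, hq, rfl⟩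
    have hc : ((m:ℝ)) * dist p q ≤ ((m+1 : ℕ) : ℝ) * dist p q := by
      have : ((m:ℝ)) ≤ ((m+1 : ℕ) : ℝ) := by exact_mod_cast Nat.le_succ m
      exact mul_le_mul_of_nonneg_right this dist_nonneg
    linarith
  have hf_lip : ∀ (m : ℕ) (p p' : X × K), f m p ≤ f m p' + m * dist p p' := by
    intro m p p'
    refine csSup_le (himne m p) ?_
    rintro y ⟨q, hq, rfl⟩
    dsimp only
    have h1 : u' q - m * dist p' q ≤ f m p' := le_csSup (hbdd m p') ⟨q, hq, rfl⟩
    have h2 : dist p' q ≤ dist p' p + dist p q := dist_triangle _ _ _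
    have h3 : (m:ℝ) * dist p' q ≤ (m:ℝ) * (dist p' p + dist p q) :=
      mul_le_mul_of_nonneg_left h2 (Nat.cast_nonneg m)
    have h4 : dist p' p = dist p p' := dist_comm _ _
    nlinarith
  have hf_absdiff : ∀ (m : ℕ) (p p' : X × K), |f m p - f m p'| ≤ m * dist p p' := by
    intro m p p'
    rw [abs_sub_le_iff]
    constructor
    · linarith [hf_lip m p p']
    · have := hf_lip m p' p
      rw [dist_comm p' p] at this
      linarith
  have hf_cont : ∀ m : ℕ, Continuous (f m) := by
    intro m
    have hl : LipschitzWith (m : NNReal) (f m) := LipschitzWith.of_dist_le_mul fun p p' => by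
      simpa [Real.dist_eq] using hf_absdiff m p p'
    exact hl.continuous
  -- pointwise convergence on S
  have hf_tendsto : ∀ p ∈ S, Tendsto (fun m => f m p) atTop (𝓝 (u' p)) := by
    intro p hp
    rw [tendsto_order]
    constructor
    · intro a ha
      exact Eventually.of_forall fun m => lt_of_lt_of_le ha (hle_f m p hp)
    · intro t ht
      set t' : ℝ := (u' p + t) / 2 with ht'
      have ht'1 : u' p < t' := by rw [ht']; linarith
      have ht'2 : t' < t := by rw [ht']; linarith
      obtain ⟨V, hVlt, hVopen, hpV⟩ := eventually_nhds_iff.1 (hu p t' ht'1)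
      obtain ⟨δ, hδpos, hball⟩ := Metric.mem_nhds_iff.1 (hVopen.mem_nhds hpV)
      obtain ⟨N, hN⟩ := exists_nat_ge ((M - t') / δ)
      filter_upwards [eventually_ge_atTop N] with m hm
      refine lt_of_le_of_lt ?_ ht'2
      refine csSup_le (himne m p) ?_
      rintro y ⟨q, hq, rfl⟩
      dsimp only
      by_cases hdq : dist q p < δ
      · have hqV : q ∈ V := hball hdq
        have h5 := hVlt q hqV
        have h6 : (0:ℝ) ≤ (m:ℝ) * dist p q := mul_nonneg (Nat.cast_nonneg m) dist_nonneg
        linarith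
      · push_neg at hdq
        have hmN : ((M - t') / δ) ≤ (m:ℝ) := le_trans hN (by exact_mod_cast hm)
        have h7 : M - t' ≤ (m:ℝ) * δ := by
          rw [div_le_iff₀ hδpos] at hmN
          linarith
        have h8 : (m:ℝ) * δ ≤ (m:ℝ) * dist p q := by
          rw [dist_comm p q]
          exact mul_le_mul_of_nonneg_left hdq (Nat.cast_nonneg m)
        have h9 := hM q hq
        linarith
  -- measurability of u x0
  have husc0 : UpperSemicontinuous (fun θ => u x0 θ) := by
    intro θ y hy
    exact ((continuous_const.prodMk continuous_id).tendsto θ).eventually (hu (x0, θ) y hy)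
  have hmeas0 : Measurable (fun θ => u x0 θ) := husc0.measurable
  have hfx0cont : ∀ m : ℕ, Continuous (fun θ => f m (x0, θ)) :=
    fun m => (hf_cont m).comp (continuous_const.prodMk continuous_id)
  set g : ℕ → BoundedContinuousFunction K ℝ :=
    fun m => BoundedContinuousFunction.mkOfCompact ⟨fun θ => f m (x0, θ), hfx0cont m⟩ with hg
  have hint_fn : ∀ (m n : ℕ), Integrable (fun θ => f m (x n, θ)) (G n : Measure K) := by
    intro m n
    have hc : Continuous fun θ => f m (x n, θ) :=
      (hf_cont m).comp (continuous_const.prodMk continuous_id)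
    exact (BoundedContinuousFunction.mkOfCompact ⟨_, hc⟩).integrable _
  have hint0n : ∀ (m n : ℕ), Integrable (fun θ => f m (x0, θ)) (G n : Measure K) :=
    fun m n => (g m).integrable _
  have hint00 : ∀ m : ℕ, Integrable (fun θ => f m (x0, θ)) (G0 : Measure K) :=
    fun m => (g m).integrable _
  -- key estimate for each m
  have key : ∀ m : ℕ, limsup (fun n => upperIntegralEReal (u (x n)) (G n : Measure K)) atTop
      ≤ ((∫ θ, f m (x0, θ) ∂(G0 : Measure K) : ℝ) : EReal) := by
    intro m
    have h1 : ∀ n, upperIntegralEReal (u (x n)) (G n : Measure K) ≤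
        ((∫ θ, f m (x n, θ) ∂(G n : Measure K) : ℝ) : EReal) := by
      intro n
      rw [upperIntegralEReal]
      split_ifs with hInt
      · exact EReal.coe_le_coe_iff.2 (integral_mono hInt (hint_fn m n)
          (fun θ => hle_f m (x n, θ) (hxnS n θ)))
      · exact bot_le
    have hA : Tendsto (fun n => ∫ θ, f m (x0, θ) ∂(G n : Measure K)) atTop
        (𝓝 (∫ θ, f m (x0, θ) ∂(G0 : Measure K))) := by
      have := ProbabilityMeasure.tendsto_iff_forall_integral_tendsto.mp hG (g m)
      simpa [hg] using this
    have hd0 : Tendsto (fun n => (m:ℝ) * dist (x n) x0) atTop (𝓝 0) := by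
      have h := hx.dist (tendsto_const_nhds : Tendsto (fun _ : ℕ => x0) atTop (𝓝 x0))
      rw [dist_self] at h
      simpa using h.const_mul (m:ℝ)
    have hdiff : Tendsto (fun n => (∫ θ, f m (x n, θ) ∂(G n : Measure K))
        - ∫ θ, f m (x0, θ) ∂(G n : Measure K)) atTop (𝓝 0) := by
      refine squeeze_zero_norm (fun n => ?_) hd0
      rw [← integral_sub (hint_fn m n) (hint0n m n)]
      have hb := norm_integral_le_of_norm_le_const (μ := (G n : Measure K))
        (C := (m:ℝ) * dist (x n) x0)
        (f := fun θ => f m (x n, θ) - f m (x0, θ)) ?_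
      · simpa using hb
      · refine Eventually.of_forall fun θ => ?_
        have hd : dist ((x n, θ) : X × K) (x0, θ) = dist (x n) x0 := by
          rw [Prod.dist_eq]
          simp [max_eq_left dist_nonneg]
        have := hf_absdiff m (x n, θ) (x0, θ)
        rw [hd] at this
        simpa [Real.norm_eq_abs] using this
    have h2re : Tendsto (fun n => ∫ θ, f m (x n, θ) ∂(G n : Measure K)) atTop
        (𝓝 (∫ θ, f m (x0, θ) ∂(G0 : Measure K))) := by
      have := hdiff.add hA
      simpa using this
    calc limsup (fun n => upperIntegralEReal (u (x n)) (G n : Measure K)) atTop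
        ≤ limsup (fun n => ((∫ θ, f m (x n, θ) ∂(G n : Measure K) : ℝ) : EReal)) atTop :=
          limsup_le_limsup (Eventually.of_forall h1)
      _ = _ := ((continuous_coe_real_ereal.tendsto _).comp h2re).limsup_eq
  -- the monotone limit of the approximations
  set J : ℕ → ℝ≥0∞ := fun m => ∫⁻ θ, ENNReal.ofReal (M - f m (x0, θ)) ∂(G0 : Measure K) with hJ
  set Jinf : ℝ≥0∞ := ∫⁻ θ, ENNReal.ofReal (M - u x0 θ) ∂(G0 : Measure K) with hJinf
  have hJmono : Monotone J := by
    intro a b hab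
    refine lintegral_mono fun θ => ?_
    exact ENNReal.ofReal_le_ofReal (by have := hf_anti (x0, θ) hab; linarith)
  have hptsup : ∀ θ : K, (⨆ m, ENNReal.ofReal (M - f m (x0, θ))) = ENNReal.ofReal (M - u x0 θ) := by
    intro θ
    have hmono : Monotone fun m => ENNReal.ofReal (M - f m (x0, θ)) := fun a b hab =>
      ENNReal.ofReal_le_ofReal (by have := hf_anti (x0, θ) hab; linarith)
    have h1 : Tendsto (fun m => ENNReal.ofReal (M - f m (x0, θ))) atTop
        (𝓝 (ENNReal.ofReal (M - u x0 θ))) :=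
      (ENNReal.continuous_ofReal.tendsto _).comp
        (tendsto_const_nhds.sub (hf_tendsto _ (hx0S θ)))
    exact tendsto_nhds_unique (tendsto_atTop_iSup hmono) h1
  have hsup : (⨆ m, J m) = Jinf := by
    rw [hJ, hJinf]
    rw [← lintegral_iSup (f := fun m θ => ENNReal.ofReal (M - f m (x0, θ))) (fun m => ((measurable_const.sub (hfx0cont m).measurable).ennreal_ofReal :
        Measurable fun θ => ENNReal.ofReal (M - f m (x0, θ))))
      (fun a b hab θ => (ENNReal.ofReal_le_ofReal (by have := hf_anti (x0, θ) hab; linarith) :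
        ENNReal.ofReal (M - f a (x0, θ)) ≤ ENNReal.ofReal (M - f b (x0, θ))))]
    exact lintegral_congr fun θ => hptsup θ
  have hJm_fin : ∀ m : ℕ, J m ≠ ∞ := by
    intro m
    have hb : ∀ θ, ENNReal.ofReal (M - f m (x0, θ)) ≤ ENNReal.ofReal (M + ‖g m‖) := by
      intro θ
      refine ENNReal.ofReal_le_ofReal ?_
      have h2 : -(f m (x0, θ)) ≤ ‖g m‖ := by
        have h3 : ‖(g m) θ‖ ≤ ‖g m‖ := (g m).norm_coe_le_norm θ
        have h4 : |f m (x0, θ)| ≤ ‖g m‖ := by simpa [hg, Real.norm_eq_abs] using h3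
        linarith [neg_abs_le (f m (x0, θ)), abs_nonneg (f m (x0, θ))]
      linarith
    refine ne_of_lt (lt_of_le_of_lt (lintegral_mono hb) ?_)
    rw [lintegral_const]
    simp only [measure_univ, mul_one]
    exact ENNReal.ofReal_lt_top
  have hL_eq : ∀ m : ℕ, (∫ θ, f m (x0, θ) ∂(G0 : Measure K)) = M - (J m).toReal := by
    intro m
    have hnn : 0 ≤ᵐ[(G0 : Measure K)] fun θ => M - f m (x0, θ) :=
      Eventually.of_forall fun θ => by
        simp only [Pi.zero_apply]
        linarith [hf_le_M m (x0, θ)]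
    have h1 : (∫ θ, (M - f m (x0, θ)) ∂(G0 : Measure K)) = (J m).toReal := by
      rw [integral_eq_lintegral_of_nonneg_ae hnn
        ((continuous_const.sub (hfx0cont m)).aestronglyMeasurable)]
    have h2 : (∫ θ, (M - f m (x0, θ)) ∂(G0 : Measure K))
        = M - ∫ θ, f m (x0, θ) ∂(G0 : Measure K) := by
      rw [integral_sub (integrable_const M) (hint00 m), integral_const]
      simp
    linarith
  by_cases hfin : Jinf = ∞
  · -- non-integrable case: both sides are ⊥
    have hnotint : ¬ Integrable (fun θ => u x0 θ) (G0 : Measure K) := by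
      intro hInt
      have hInt2 : Integrable (fun θ => M - u x0 θ) (G0 : Measure K) :=
        (integrable_const M).sub hInt
      have hfi := hInt2.hasFiniteIntegral
      rw [hasFiniteIntegral_iff_norm] at hfi
      have hle : Jinf ≤ ∫⁻ θ, ENNReal.ofReal ‖M - u x0 θ‖ ∂(G0 : Measure K) := by
        refine lintegral_mono fun θ => ?_
        exact ENNReal.ofReal_le_ofReal (by rw [Real.norm_eq_abs]; exact le_abs_self _)
      exact absurd (lt_of_le_of_lt hle hfi) (by simp [hfin])
    rw [upperIntegralEReal, if_neg hnotint]
    have hJtop : Tendsto J atTop (𝓝 ⊤) := by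
      have := tendsto_atTop_iSup hJmono
      rwa [hsup, hfin] at this
    have hTR : Tendsto (fun m => (J m).toReal) atTop atTop := by
      rw [tendsto_atTop]
      intro b
      have hev : ∀ᶠ m in atTop, J m ∈ Set.Ioi (ENNReal.ofReal |b|) :=
        hJtop (Ioi_mem_nhds ENNReal.ofReal_lt_top)
      filter_upwards [hev] with m hm
      have h1 : (ENNReal.ofReal |b|).toReal ≤ (J m).toReal :=
        ENNReal.toReal_mono (hJm_fin m) (le_of_lt hm)
      rw [ENNReal.toReal_ofReal (abs_nonneg b)] at h1
      exact le_trans (le_abs_self b) h1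
    have hLbot : Tendsto (fun m => ((∫ θ, f m (x0, θ) ∂(G0 : Measure K) : ℝ) : EReal))
        atTop (𝓝 ⊥) := by
      rw [EReal.tendsto_nhds_bot_iff_real]
      intro r
      filter_upwards [hTR.eventually_gt_atTop (M - r)] with m hm
      rw [hL_eq m]
      exact_mod_cast (by linarith : M - (J m).toReal < r)
    exact ge_of_tendsto' hLbot key
  · -- integrable case
    have hInt : Integrable (fun θ => u x0 θ) (G0 : Measure K) := by
      refine ⟨hmeas0.aestronglyMeasurable, ?_⟩
      rw [hasFiniteIntegral_iff_norm]
      have hb : ∀ θ, ENNReal.ofReal ‖u x0 θ‖ ≤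
          ENNReal.ofReal |M| + ENNReal.ofReal (M - u x0 θ) := by
        intro θ
        rw [← ENNReal.ofReal_add (abs_nonneg M) (sub_nonneg.2 (hM _ (hx0S θ)))]
        refine ENNReal.ofReal_le_ofReal ?_
        rw [Real.norm_eq_abs]
        have h1 := hM _ (hx0S θ)
        have h2 := le_abs_self M
        have h3 := neg_abs_le M
        rw [abs_le]
        constructor <;> linarith
      calc (∫⁻ θ, ENNReal.ofReal ‖u x0 θ‖ ∂(G0 : Measure K))
          ≤ ∫⁻ θ, (ENNReal.ofReal |M| + ENNReal.ofReal (M - u x0 θ)) ∂(G0 : Measure K) :=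
            lintegral_mono hb
        _ = ENNReal.ofReal |M| + Jinf := by
            rw [lintegral_add_left measurable_const, lintegral_const]
            simp [hJinf]
        _ < ∞ := ENNReal.add_lt_top.2 ⟨ENNReal.ofReal_lt_top, lt_top_iff_ne_top.2 hfin⟩
    rw [upperIntegralEReal, if_pos hInt]
    have hIeq : (∫ θ, u x0 θ ∂(G0 : Measure K)) = M - Jinf.toReal := by
      have hnn : 0 ≤ᵐ[(G0 : Measure K)] fun θ => M - u x0 θ :=
        Eventually.of_forall fun θ => sub_nonneg.2 (hM _ (hx0S θ))
      have h1 : (∫ θ, (M - u x0 θ) ∂(G0 : Measure K)) = Jinf.toReal := by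
        rw [integral_eq_lintegral_of_nonneg_ae hnn
          ((measurable_const.sub hmeas0).aestronglyMeasurable)]
      have h2 : (∫ θ, (M - u x0 θ) ∂(G0 : Measure K))
          = M - ∫ θ, u x0 θ ∂(G0 : Measure K) := by
        rw [integral_sub (integrable_const M) hInt, integral_const]
        simp
      linarith
    have hJt : Tendsto J atTop (𝓝 Jinf) := by
      have := tendsto_atTop_iSup hJmono
      rwa [hsup] at this
    have hTR : Tendsto (fun m => (J m).toReal) atTop (𝓝 Jinf.toReal) :=
      (ENNReal.tendsto_toReal hfin).comp hJt
    have hLre : Tendsto (fun m => ∫ θ, f m (x0, θ) ∂(G0 : Measure K)) atTop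
        (𝓝 (M - Jinf.toReal)) := by
      simp only [hL_eq]
      exact tendsto_const_nhds.sub hTR
    rw [hIeq]
    exact ge_of_tendsto' ((continuous_coe_real_ereal.tendsto _).comp hLre) key
end

section
/- Let α < β be real numbers, L > 0, and c₀ ∈ ℝ. Every function a : [α, β] → ℝ that is convex, antitone (decreasing), Lipschitz with constant L, and satisfies a(α) = c₀ is the uniform limit of a sequence of functions ã_n : [α, β] → ℝ each of which is convex, antitone, Lipschitz with constant L, continuously differentiable on [α, β], and satisfies ã_n(α) = c₀. -/
open Filter Topology intervalIntegral

section Aux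

variable {α β L : ℝ}

/-- The clamp of `y` to `[α, β]`. -/
noncomputable def clampI (α β y : ℝ) : ℝ := max α (min y β)

lemma clampI_mem (hαβ : α ≤ β) (y : ℝ) : clampI α β y ∈ Set.Icc α β :=
  ⟨le_max_left _ _, max_le hαβ (min_le_right _ _)⟩

lemma clampI_eq_self (hy : y ∈ Set.Icc α β) : clampI α β y = y := by
  rcases hy with ⟨h1, h2⟩
  simp [clampI, min_eq_left h2, max_eq_right h1]

lemma clampI_mono : Monotone (clampI α β) := fun x y h =>
  max_le_max le_rfl (min_le_min h le_rfl)

lemma abs_clampI_sub_le (x y : ℝ) : |clampI α β x - clampI α β y| ≤ |x - y| := by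
  unfold clampI
  have h1 : ∀ u v : ℝ, |min u β - min v β| ≤ |u - v| := by
    intro u v
    rcases le_total u β with h | h <;> rcases le_total v β with h' | h' <;>
      simp only [min_eq_left, min_eq_right, h, h'] <;> rw [abs_le] <;> refine ⟨?_, ?_⟩ <;>
      nlinarith [le_abs_self (u - v), neg_abs_le (u - v), le_abs_self (v - u),
        neg_abs_le (v - u), abs_sub_comm u v]
  have h2 : ∀ u v : ℝ, |max α u - max α v| ≤ |u - v| := by
    intro u v
    rcases le_total α u with h | h <;> rcases le_total α v with h' | h' <;>
      simp only [max_eq_left, max_eq_right, h, h'] <;> rw [abs_le] <;> refine ⟨?_, ?_⟩ <;>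
      nlinarith [le_abs_self (u - v), neg_abs_le (u - v), le_abs_self (v - u),
        neg_abs_le (v - u), abs_sub_comm u v]
  exact (h2 _ _).trans (h1 _ _)

end Aux

lemma comb_mono {p q u v u' v' : ℝ} (hp : 0 ≤ p) (hq : 0 ≤ q) (hu : u ≤ u') (hv : v ≤ v') :
    p * u + q * v ≤ p * u' + q * v' :=
  add_le_add (mul_le_mul_of_nonneg_left hu hp) (mul_le_mul_of_nonneg_left hv hq)

lemma comb_le_of {p q u v w : ℝ} (hp : 0 ≤ p) (hq : 0 ≤ q) (hpq : p + q = 1)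
    (hu : u ≤ w) (hv : v ≤ w) : p * u + q * v ≤ w := by
  have h1 := comb_mono hp hq hu hv
  have h2 : p * w + q * w = w := by linear_combination w * hpq
  linarith

lemma le_comb_of {p q u v w : ℝ} (hp : 0 ≤ p) (hq : 0 ≤ q) (hpq : p + q = 1)
    (hu : w ≤ u) (hv : w ≤ v) : w ≤ p * u + q * v := by
  have h1 := comb_mono hp hq hu hv
  have h2 : p * w + q * w = w := by linear_combination w * hpq
  linarith

section Avg

lemma smooth_avg (α L h : ℝ) (hh : 0 < h) (A : ℝ → ℝ)
    (hAcont : Continuous A)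
    (hAanti : ∀ x y : ℝ, x ≤ y → A y ≤ A x)
    (hAlip : ∀ x y : ℝ, |A x - A y| ≤ L * |x - y|)
    (hAconv : ∀ x y p q : ℝ, α ≤ x → α ≤ y → 0 ≤ p → 0 ≤ q → p + q = 1 →
      A (p * x + q * y) ≤ p * A x + q * A y) :
    ∃ g : ℝ → ℝ, ContDiff ℝ 1 g ∧
      (∀ x y : ℝ, x ≤ y → g y ≤ g x) ∧
      (∀ x y : ℝ, |g x - g y| ≤ L * |x - y|) ∧
      (∀ x y p q : ℝ, α ≤ x → α ≤ y → 0 ≤ p → 0 ≤ q → p + q = 1 →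
        g (p * x + q * y) ≤ p * g x + q * g y) ∧
      (∀ x : ℝ, |g x - A x| ≤ L * h) := by
  set g : ℝ → ℝ := fun x => (∫ t in (0:ℝ)..h, A (x + t)) / h with hg
  have hint : ∀ x : ℝ, Continuous fun t => A (x + t) := fun x =>
    hAcont.comp (continuous_const.add continuous_id)
  refine ⟨g, ?_, ?_, ?_, ?_, ?_⟩
  · -- C¹
    have hder : ∀ x : ℝ, HasDerivAt g ((A (x + h) - A x) / h) x := by
      intro x
      have hF : ∀ y : ℝ, HasDerivAt (fun u => ∫ t in (0:ℝ)..u, A t) (A y) y := fun y =>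
        (hAcont.integral_hasStrictDerivAt 0 y).hasDerivAt
      have h1 : HasDerivAt (fun u : ℝ => ∫ t in (0:ℝ)..(u + h), A t) (A (x + h)) x :=
        (hF (x + h)).comp_add_const x h
      have h2 : HasDerivAt (fun u : ℝ => ((∫ t in (0:ℝ)..(u + h), A t)
          - ∫ t in (0:ℝ)..u, A t) / h) ((A (x + h) - A x) / h) x := (h1.sub (hF x)).div_const h
      have heq : g = fun u : ℝ => ((∫ t in (0:ℝ)..(u + h), A t)
          - ∫ t in (0:ℝ)..u, A t) / h := by
        funext u
        show (∫ t in (0:ℝ)..h, A (u + t)) / h = _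
        congr 1
        rw [intervalIntegral.integral_comp_add_left A u, add_zero,
          intervalIntegral.integral_interval_sub_left (hAcont.intervalIntegrable _ _)
            (hAcont.intervalIntegrable _ _)]
      rw [heq]
      exact h2
    rw [contDiff_one_iff_deriv]
    refine ⟨fun x => (hder x).differentiableAt, ?_⟩
    have hde : deriv g = fun x => (A (x + h) - A x) / h := funext fun x => (hder x).deriv
    rw [hde]
    exact ((hAcont.comp (continuous_id.add continuous_const)).sub hAcont).div_const _
  · -- antitone
    intro x y hxy
    have hmono : (∫ t in (0:ℝ)..h, A (y + t)) ≤ ∫ t in (0:ℝ)..h, A (x + t) :=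
      intervalIntegral.integral_mono_on hh.le ((hint y).intervalIntegrable _ _)
        ((hint x).intervalIntegrable _ _) (fun t _ => hAanti _ _ (by linarith))
    exact div_le_div_of_nonneg_right hmono hh.le |>.trans_eq rfl
  · -- Lipschitz
    intro x y
    have key : g x - g y = (∫ t in (0:ℝ)..h, (A (x + t) - A (y + t))) / h := by
      simp only [hg]
      rw [div_sub_div_same, ← intervalIntegral.integral_sub ((hint x).intervalIntegrable _ _)
        ((hint y).intervalIntegrable _ _)]
    have hb : ∀ t ∈ Set.uIoc (0:ℝ) h, ‖A (x + t) - A (y + t)‖ ≤ L * |x - y| := by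
      intro t _
      have e : (x + t) - (y + t) = x - y := by ring
      calc ‖A (x + t) - A (y + t)‖ = |A (x + t) - A (y + t)| := rfl
        _ ≤ L * |(x + t) - (y + t)| := hAlip _ _
        _ = L * |x - y| := by rw [e]
    have hnorm := intervalIntegral.norm_integral_le_of_norm_le_const hb
    rw [sub_zero, abs_of_pos hh] at hnorm
    rw [key, abs_div, abs_of_pos hh, div_le_iff₀ hh]
    simpa [Real.norm_eq_abs] using hnorm
  · -- convex
    intro x y p q hx hy hp hq hpq
    have key : ∀ t ∈ Set.Icc (0:ℝ) h, A (p * x + q * y + t) ≤ p * A (x + t) + q * A (y + t) := by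
      intro t ht
      have e : p * x + q * y + t = p * (x + t) + q * (y + t) := by linear_combination (-t) * hpq
      rw [e]
      exact hAconv _ _ _ _ (by linarith [ht.1]) (by linarith [ht.1]) hp hq hpq
    have hmono : (∫ t in (0:ℝ)..h, A (p * x + q * y + t))
        ≤ ∫ t in (0:ℝ)..h, (p * A (x + t) + q * A (y + t)) :=
      intervalIntegral.integral_mono_on hh.le ((hint _).intervalIntegrable _ _)
        (((continuous_const.mul (hint x)).add (continuous_const.mul (hint y))).intervalIntegrable _ _)
        key
    have hsplit : (∫ t in (0:ℝ)..h, (p * A (x + t) + q * A (y + t)))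
        = p * (∫ t in (0:ℝ)..h, A (x + t)) + q * ∫ t in (0:ℝ)..h, A (y + t) := by
      rw [intervalIntegral.integral_add (f := fun t => p * A (x + t)) (g := fun t => q * A (y + t))
        ((continuous_const.mul (hint x)).intervalIntegrable _ _)
        ((continuous_const.mul (hint y)).intervalIntegrable _ _),
        intervalIntegral.integral_const_mul, intervalIntegral.integral_const_mul]
    have : g (p * x + q * y) ≤ (p * (∫ t in (0:ℝ)..h, A (x + t))
        + q * ∫ t in (0:ℝ)..h, A (y + t)) / h := by
      rw [← hsplit]
      exact div_le_div_of_nonneg_right hmono hh.le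
    calc g (p * x + q * y) ≤ _ := this
      _ = p * g x + q * g y := by simp only [hg]; ring
  · -- closeness
    intro x
    have hiconst : (∫ _ in (0:ℝ)..h, A x) = h * A x := by
      rw [intervalIntegral.integral_const, smul_eq_mul, sub_zero]
    have key : g x - A x = (∫ t in (0:ℝ)..h, (A (x + t) - A x)) / h := by
      rw [intervalIntegral.integral_sub ((hint x).intervalIntegrable _ _)
        (continuous_const.intervalIntegrable _ _), hiconst, sub_div, mul_comm,
        mul_div_assoc, div_self hh.ne', mul_one]
    have hb : ∀ t ∈ Set.uIoc (0:ℝ) h, ‖A (x + t) - A x‖ ≤ L * h := by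
      intro t ht
      rw [Set.uIoc_of_le hh.le] at ht
      have hL' : 0 ≤ L := by
        have := hAlip 0 1
        have h1 : (0:ℝ) ≤ |A 0 - A 1| := abs_nonneg _
        simpa using le_trans h1 this
      have e : (x + t) - x = t := by ring
      calc ‖A (x + t) - A x‖ = |A (x + t) - A x| := rfl
        _ ≤ L * |(x + t) - x| := hAlip _ _
        _ = L * t := by rw [e, abs_of_pos ht.1]
        _ ≤ L * h := by nlinarith [ht.2]
    have hnorm := intervalIntegral.norm_integral_le_of_norm_le_const hb
    rw [sub_zero, abs_of_pos hh] at hnorm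
    rw [key, abs_div, abs_of_pos hh, div_le_iff₀ hh]
    simpa [Real.norm_eq_abs] using hnorm

end Avg

/-- Every convex, decreasing, `L`-Lipschitz function on `[α, β]` with
prescribed value at `α` is the uniform limit of continuously differentiable functions with
the same properties. -/
theorem convex_antitone_lipschitz_smooth_approx
    (α β : ℝ) (hαβ : α < β) (L : ℝ) (hL : 0 < L) (c0 : ℝ)
    (a : ℝ → ℝ) (hconv : ConvexOn ℝ (Set.Icc α β) a)
    (hanti : AntitoneOn a (Set.Icc α β))
    (hlip : LipschitzOnWith (Real.toNNReal L) a (Set.Icc α β))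
    (ha : a α = c0) :
    ∃ as : ℕ → ℝ → ℝ,
      (∀ n, ConvexOn ℝ (Set.Icc α β) (as n) ∧ AntitoneOn (as n) (Set.Icc α β) ∧
        LipschitzOnWith (Real.toNNReal L) (as n) (Set.Icc α β) ∧
        ContDiffOn ℝ 1 (as n) (Set.Icc α β) ∧ as n α = c0) ∧
      TendstoUniformlyOn as a atTop (Set.Icc α β) := by
  have hβ : α ≤ β := hαβ.le
  have hLcoe : (Real.toNNReal L : ℝ) = L := Real.coe_toNNReal L hL.le
  set A : ℝ → ℝ := fun y => a (clampI α β y) with hA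
  have hAeq : ∀ y ∈ Set.Icc α β, A y = a y := fun y hy => by simp only [hA, clampI_eq_self hy]
  have hAlip : ∀ x y : ℝ, |A x - A y| ≤ L * |x - y| := by
    intro x y
    have h1 := (lipschitzOnWith_iff_dist_le_mul.1 hlip) _ (clampI_mem hβ x) _ (clampI_mem hβ y)
    rw [Real.dist_eq, Real.dist_eq, hLcoe] at h1
    exact h1.trans (mul_le_mul_of_nonneg_left (abs_clampI_sub_le x y) hL.le)
  have hAcont : Continuous A := by
    have : LipschitzWith (Real.toNNReal L) A := by
      apply LipschitzWith.of_dist_le_mul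
      intro x y
      rw [Real.dist_eq, Real.dist_eq, hLcoe]
      exact hAlip x y
    exact this.continuous
  have hAanti : ∀ x y : ℝ, x ≤ y → A y ≤ A x := fun x y hxy =>
    hanti (clampI_mem hβ x) (clampI_mem hβ y) (clampI_mono hxy)
  have hAconv : ∀ x y p q : ℝ, α ≤ x → α ≤ y → 0 ≤ p → 0 ≤ q → p + q = 1 →
      A (p * x + q * y) ≤ p * A x + q * A y := by
    intro x y p q hx hy hp hq hpq
    have hcx : clampI α β x = min x β := max_eq_right (le_min hx hβ)
    have hcy : clampI α β y = min y β := max_eq_right (le_min hy hβ)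
    have hz : α ≤ p * x + q * y := le_comb_of hp hq hpq hx hy
    have hcz : clampI α β (p * x + q * y) = min (p * x + q * y) β := max_eq_right (le_min hz hβ)
    have hmx : min x β ∈ Set.Icc α β := ⟨le_min hx hβ, min_le_right _ _⟩
    have hmy : min y β ∈ Set.Icc α β := ⟨le_min hy hβ, min_le_right _ _⟩
    have hmz : min (p * x + q * y) β ∈ Set.Icc α β := ⟨le_min hz hβ, min_le_right _ _⟩
    have hcomb : p * min x β + q * min y β ∈ Set.Icc α β :=
      ⟨le_comb_of hp hq hpq hmx.1 hmy.1, comb_le_of hp hq hpq hmx.2 hmy.2⟩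
    have hk : p * min x β + q * min y β ≤ min (p * x + q * y) β :=
      le_min (comb_mono hp hq (min_le_left x β) (min_le_left y β))
        (comb_le_of hp hq hpq (min_le_right x β) (min_le_right y β))
    have step1 : a (min (p * x + q * y) β) ≤ a (p * min x β + q * min y β) :=
      hanti hcomb hmz hk
    have step2 : a (p * min x β + q * min y β) ≤ p * a (min x β) + q * a (min y β) := by
      have := hconv.2 hmx hmy hp hq hpq
      simpa [smul_eq_mul] using this
    have e1 : A (p * x + q * y) = a (min (p * x + q * y) β) := by simp only [hA]; rw [hcz]
    have e2 : A x = a (min x β) := by simp only [hA]; rw [hcx]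
    have e3 : A y = a (min y β) := by simp only [hA]; rw [hcy]
    rw [e1, e2, e3]
    exact step1.trans step2
  have H : ∀ n : ℕ, ∃ g : ℝ → ℝ, ContDiff ℝ 1 g ∧
      (∀ x y : ℝ, x ≤ y → g y ≤ g x) ∧
      (∀ x y : ℝ, |g x - g y| ≤ L * |x - y|) ∧
      (∀ x y p q : ℝ, α ≤ x → α ≤ y → 0 ≤ p → 0 ≤ q → p + q = 1 →
        g (p * x + q * y) ≤ p * g x + q * g y) ∧
      (∀ x : ℝ, |g x - A x| ≤ L * (1 / (n + 1))) := fun n =>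
    smooth_avg α L (1 / (n + 1)) (by positivity) A hAcont hAanti hAlip hAconv
  choose g hg1 hg2 hg3 hg4 hg5 using H
  refine ⟨fun n x => (c0 - g n α) + g n x, fun n => ⟨?_, ?_, ?_, ?_, by ring⟩, ?_⟩
  · -- convex
    refine ⟨convex_Icc _ _, fun {x} hx {y} hy p q hp hq hpq => ?_⟩
    show (c0 - g n α) + g n (p • x + q • y) ≤
      p • ((c0 - g n α) + g n x) + q • ((c0 - g n α) + g n y)
    simp only [smul_eq_mul]
    have h1 := hg4 n x y p q hx.1 hy.1 hp hq hpq
    have e : p * ((c0 - g n α) + g n x) + q * ((c0 - g n α) + g n y)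
        = (c0 - g n α) + (p * g n x + q * g n y) := by linear_combination (c0 - g n α) * hpq
    rw [e]
    linarith
  · -- antitone
    intro x _ y _ hxy
    have := hg2 n x y hxy
    show (c0 - g n α) + g n y ≤ (c0 - g n α) + g n x
    linarith
  · -- lipschitz
    rw [lipschitzOnWith_iff_dist_le_mul]
    intro x _ y _
    rw [Real.dist_eq, Real.dist_eq, hLcoe]
    have e : ((c0 - g n α) + g n x) - ((c0 - g n α) + g n y) = g n x - g n y := by ring
    rw [e]
    exact hg3 n x y
  · -- C¹
    exact (contDiff_const.add (hg1 n)).contDiffOn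
  · -- uniform convergence
    rw [Metric.tendstoUniformlyOn_iff]
    intro ε hε
    have htend : Tendsto (fun n : ℕ => 2 * L * (1 / ((n : ℝ) + 1))) atTop (𝓝 0) := by
      have := tendsto_one_div_add_atTop_nhds_zero_nat (𝕜 := ℝ)
      simpa using this.const_mul (2 * L)
    filter_upwards [htend.eventually (gt_mem_nhds hε)] with n hn x hx
    have e1 : A x = a x := hAeq x hx
    have e2 : A α = c0 := by rw [hAeq α ⟨le_refl _, hβ⟩, ha]
    have h5x : |A x - g n x| ≤ L * (1 / (n + 1)) := by
      rw [abs_sub_comm]; exact hg5 n x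
    have h5α : |A α - g n α| ≤ L * (1 / (n + 1)) := by
      rw [abs_sub_comm]; exact hg5 n α
    rw [Real.dist_eq]
    have e : a x - ((c0 - g n α) + g n x) = (A x - g n x) - (A α - g n α) := by
      rw [e1, e2]; ring
    rw [e]
    calc |(A x - g n x) - (A α - g n α)| ≤ |A x - g n x| + |A α - g n α| := abs_sub _ _
      _ ≤ L * (1 / (n + 1)) + L * (1 / (n + 1)) := add_le_add h5x h5α
      _ < ε := by rw [← two_mul, ← mul_assoc] at *; linarith
end
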